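/- arXiv:1910.07072 — 10 statements merged into one kernel-verified Lean document; each statement's English description precedes it below -/
import Mathlib

section
/- Let S and A be finite nonempty sets, r : S × A → ℝ a reward function, and p a transition kernel assigning to each (s,a) ∈ S × A a probability vector p(·|s,a) on S (nonnegative entries summing to 1). Suppose J* ∈ ℝ and q* : S × A → ℝ satisfy the average-reward Bellman equation J* + q*(s,a) = r(s,a) + Σ_{s'} p(s'|s,a) v*(s') for all (s,a), where v*(s) := max_{a∈A} q*(s,a). Let 0 ≤ γ < 1 and suppose Q* : S × A → ℝ and V* : S → ℝ satisfy the discounted Bellman equation Q*(s,a) = r(s,a) + γ Σ_{s'} p(s'|s,a) V*(s') and V*(s) = max_{a∈A} Q*(s,a). Then for every s ∈ S, |J* − (1−γ) V*(s)| ≤ (1−γ) · span(v*), where span(f) := max_s f(s) − min_s f(s). -/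
/-!
Write `T` for the discounted Bellman operator, so that `V* = T V*`. Substituting the
average-reward Bellman equation into `T v*` shows that `T` moves `v*` only a little:
`v* + J* - (1 - γ) max v* ≤ T v* ≤ v* + J* - (1 - γ) min v*`. Since `T` is monotone
and shifts constants by the factor `γ`, a function that `T` moves by at most a constant `d`
lies within `d / (1 - γ)` of the fixed point `V*`; this pins `(1 - γ) V* - J*` between
`(1 - γ) (v* - max v*)` and `(1 - γ) (v* - min v*)`.
-/

open Finset Function

section FixedPointComparison

variable {S : Type*} [Fintype S] [Nonempty S] {T : (S → ℝ) → S → ℝ} {γ : ℝ}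

theorem one_sub_mul_sub_le_of_isFixedPt (hT : Monotone T)
    (hshift : ∀ V c, T (fun s => V s + c) = fun s => T V s + γ * c) (hγ1 : γ < 1)
    {V W : S → ℝ} (hV : IsFixedPt T V) {d : ℝ} (hW : ∀ s, T W s ≤ W s + d) (s : S) :
    (1 - γ) * (V s - W s) ≤ d := by
  obtain ⟨s₀, -, hs₀⟩ := exists_max_image univ (fun s => V s - W s) univ_nonempty
  set U := V s₀ - W s₀
  have hVU : V ≤ fun s => W s + U := fun s => by linarith [hs₀ s (mem_univ s)]
  have hU : U ≤ d + γ * U := by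
    have h := hT hVU s₀
    rw [hV, hshift] at h
    linarith [hW s₀]
  have hs : V s - W s ≤ U := hs₀ s (mem_univ s)
  nlinarith

theorem le_one_sub_mul_sub_of_isFixedPt (hT : Monotone T)
    (hshift : ∀ V c, T (fun s => V s + c) = fun s => T V s + γ * c) (hγ1 : γ < 1)
    {V W : S → ℝ} (hV : IsFixedPt T V) {d : ℝ} (hW : ∀ s, W s + d ≤ T W s) (s : S) :
    d ≤ (1 - γ) * (V s - W s) := by
  have hT' : Monotone fun X => -T (-X) := fun X Y h => neg_le_neg (hT (neg_le_neg h))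
  have hshift' : ∀ X c, -T (-fun s => X s + c) = fun s => (-T (-X)) s + γ * c := by
    intro X c
    have hneg : (-fun s => X s + c) = fun s => (-X) s + -c := by
      ext s
      simp only [Pi.neg_apply, neg_add]
    ext s
    rw [hneg, hshift]
    simp only [Pi.neg_apply]
    ring
  have hV' : IsFixedPt (fun X => -T (-X)) (-V) := by
    simp only [IsFixedPt, neg_neg, hV.eq]
  have h := one_sub_mul_sub_le_of_isFixedPt hT' hshift' hγ1 hV' (W := -W) (d := -d)
    (fun s => by simp only [Pi.neg_apply, neg_neg]; linarith [hW s]) s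
  simp only [Pi.neg_apply] at h
  linarith

end FixedPointComparison

section WeightedAverage

variable {ι : Type*} [Fintype ι] {w f : ι → ℝ} {B : ℝ}

theorem sum_mul_le_of_le_of_sum_eq_one (hw0 : ∀ i, 0 ≤ w i) (hw1 : ∑ i, w i = 1)
    (hf : ∀ i, f i ≤ B) : ∑ i, w i * f i ≤ B :=
  calc ∑ i, w i * f i ≤ ∑ i, w i * B :=
        sum_le_sum fun i _ => mul_le_mul_of_nonneg_left (hf i) (hw0 i)
    _ = B := by rw [← sum_mul, hw1, one_mul]

theorem le_sum_mul_of_le_of_sum_eq_one (hw0 : ∀ i, 0 ≤ w i) (hw1 : ∑ i, w i = 1)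
    (hf : ∀ i, B ≤ f i) : B ≤ ∑ i, w i * f i :=
  calc B = ∑ i, w i * B := by rw [← sum_mul, hw1, one_mul]
    _ ≤ ∑ i, w i * f i := sum_le_sum fun i _ => mul_le_mul_of_nonneg_left (hf i) (hw0 i)

end WeightedAverage

section BellmanOperator

variable {S A : Type*} [Fintype S] [Fintype A] [Nonempty A]

def discountedBellmanOp (r : S → A → ℝ) (p : S → A → S → ℝ) (γ : ℝ) (V : S → ℝ) :
    S → ℝ :=
  fun s => univ.sup' univ_nonempty fun a => r s a + γ * ∑ s', p s a s' * V s'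

variable {r : S → A → ℝ} {p : S → A → S → ℝ} {γ : ℝ}

theorem discountedBellmanOp_mono (hp0 : ∀ s a s', 0 ≤ p s a s') (hγ0 : 0 ≤ γ) :
    Monotone (discountedBellmanOp r p γ) := fun V W h s =>
  sup'_mono_fun fun a _ => by
    gcongr with s'
    exacts [hp0 s a s', h s']

theorem discountedBellmanOp_add_const (hp1 : ∀ s a, ∑ s', p s a s' = 1) (V : S → ℝ) (c : ℝ) :
    discountedBellmanOp r p γ (fun s => V s + c) =
      fun s => discountedBellmanOp r p γ V s + γ * c := by
  ext s
  simp only [discountedBellmanOp, mul_add, sum_add_distrib, ← sum_mul, hp1, one_mul, sup'_add,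
    add_assoc]

variable {J : ℝ} {q : S → A → ℝ} {v : S → ℝ}

theorem discountedBellmanOp_le_of_averageBellman (hp0 : ∀ s a s', 0 ≤ p s a s')
    (hp1 : ∀ s a, ∑ s', p s a s' = 1) (hγ1 : γ ≤ 1)
    (hv : ∀ s, v s = univ.sup' univ_nonempty (fun a => q s a))
    (hbell : ∀ s a, J + q s a = r s a + ∑ s', p s a s' * v s') {m : ℝ} (hm : ∀ s, m ≤ v s)
    (s : S) : discountedBellmanOp r p γ v s ≤ v s + (J - (1 - γ) * m) := by
  refine sup'_le _ _ fun a _ => ?_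
  have hq : q s a ≤ v s := hv s ▸ le_sup' (fun a => q s a) (mem_univ a)
  have hmean := le_sum_mul_of_le_of_sum_eq_one (hp0 s a) (hp1 s a) hm
  nlinarith [hbell s a]

theorem le_discountedBellmanOp_of_averageBellman (hp0 : ∀ s a s', 0 ≤ p s a s')
    (hp1 : ∀ s a, ∑ s', p s a s' = 1) (hγ1 : γ ≤ 1)
    (hv : ∀ s, v s = univ.sup' univ_nonempty (fun a => q s a))
    (hbell : ∀ s a, J + q s a = r s a + ∑ s', p s a s' * v s') {M : ℝ} (hM : ∀ s, v s ≤ M)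
    (s : S) : v s + (J - (1 - γ) * M) ≤ discountedBellmanOp r p γ v s := by
  obtain ⟨a, -, ha⟩ := exists_mem_eq_sup' univ_nonempty fun a => q s a
  refine le_sup'_of_le _ (mem_univ a) ?_
  have hmean := sum_mul_le_of_le_of_sum_eq_one (hp0 s a) (hp1 s a) hM
  nlinarith [hbell s a, hv s]

end BellmanOperator

/-- The discounted optimal value function, rescaled by `1 - γ`, is within
`(1 - γ) · span(v*)` of the optimal average reward `J*`. -/
theorem discounted_average_connection
    {S A : Type*} [Fintype S] [Fintype A] [Nonempty S] [Nonempty A]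
    (r : S → A → ℝ) (p : S → A → S → ℝ)
    (hp0 : ∀ s a s', 0 ≤ p s a s') (hp1 : ∀ s a, ∑ s', p s a s' = 1)
    (γ : ℝ) (hγ0 : 0 ≤ γ) (hγ1 : γ < 1)
    (Jstar : ℝ) (qstar : S → A → ℝ) (vstar : S → ℝ)
    (hv : ∀ s, vstar s = univ.sup' univ_nonempty (fun a => qstar s a))
    (hbell : ∀ s a, Jstar + qstar s a = r s a + ∑ s', p s a s' * vstar s')
    (Qstar : S → A → ℝ) (Vstar : S → ℝ)
    (hQ : ∀ s a, Qstar s a = r s a + γ * ∑ s', p s a s' * Vstar s')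
    (hV : ∀ s, Vstar s = univ.sup' univ_nonempty (fun a => Qstar s a)) :
    ∀ s, |Jstar - (1 - γ) * Vstar s| ≤
      (1 - γ) * (univ.sup' univ_nonempty vstar - univ.inf' univ_nonempty vstar) := by
  intro s
  have hfix : IsFixedPt (discountedBellmanOp r p γ) Vstar := funext fun s => by
    rw [hV s]
    simp only [discountedBellmanOp, hQ]
  have hmono := discountedBellmanOp_mono (r := r) hp0 hγ0
  have hshift := discountedBellmanOp_add_const (r := r) (γ := γ) hp1
  have hM : ∀ s, vstar s ≤ univ.sup' univ_nonempty vstar := fun s => le_sup' _ (mem_univ s)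
  have hm : ∀ s, univ.inf' univ_nonempty vstar ≤ vstar s := fun s => inf'_le _ (mem_univ s)
  have hupper := one_sub_mul_sub_le_of_isFixedPt hmono hshift hγ1 hfix
    (discountedBellmanOp_le_of_averageBellman hp0 hp1 hγ1.le hv hbell hm) s
  have hlower := le_one_sub_mul_sub_of_isFixedPt hmono hshift hγ1 hfix
    (le_discountedBellmanOp_of_averageBellman hp0 hp1 hγ1.le hv hbell hM) s
  rw [abs_le]
  constructor <;> nlinarith [hM s, hm s]
end

section
/- Let S and A be finite nonempty sets, r : S × A → ℝ, and p a transition kernel assigning to each (s,a) a probability vector p(·|s,a) on S. Suppose J* ∈ ℝ and q* : S × A → ℝ satisfy J* + q*(s,a) = r(s,a) + Σ_{s'} p(s'|s,a) v*(s') for all (s,a), where v*(s) := max_{a∈A} q*(s,a). Let 0 ≤ γ < 1 and suppose Q* : S × A → ℝ and V* : S → ℝ satisfy Q*(s,a) = r(s,a) + γ Σ_{s'} p(s'|s,a) V*(s') and V*(s) = max_{a∈A} Q*(s,a). Then span(V*) ≤ 2 · span(v*), where span(f) := max_s f(s) − min_s f(s). -/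
/-!
Let `T` be the discounted Bellman operator, so that `V*` is its fixed point. Since `T` is monotone
and shifts constants by `γ c`, any `W` with `T W ≤ W` dominates `V*`, and any `L` with `L ≤ T L`
is dominated by it. The average-reward equation makes `v* - min v* + J*/(1-γ)` such a `W` and
`v* - max v* + J*/(1-γ)` such an `L`; both differ from `v*` by a constant, which gives the
factor `2`.
-/

open Finset

section Comparison

variable {S : Type*} [Fintype S] [Nonempty S] {T : (S → ℝ) → S → ℝ} {γ : ℝ} {V : S → ℝ}

theorem le_of_isFixedPt_of_map_le (hmono : Monotone T)
    (hshift : ∀ f c, T (f + fun _ => c) = T f + fun _ => γ * c) (hγ : γ < 1)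
    (hV : Function.IsFixedPt T V) {W : S → ℝ} (hW : T W ≤ W) : V ≤ W := by
  set d := univ.sup' univ_nonempty (V - W)
  have hVd : V ≤ W + fun _ => d := fun s => by
    have := le_sup' (V - W) (mem_univ s)
    simp only [Pi.add_apply, Pi.sub_apply] at *
    linarith
  have hVγd : V ≤ W + fun _ => γ * d := by
    calc V = T V := hV.eq.symm
      _ ≤ T (W + fun _ => d) := hmono hVd
      _ = T W + fun _ => γ * d := hshift W d
      _ ≤ W + fun _ => γ * d := add_le_add_left hW _
  have hd : d ≤ γ * d := sup'_le _ _ fun s _ => by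
    have := hVγd s
    simp only [Pi.add_apply, Pi.sub_apply] at *
    linarith
  have hd0 : d ≤ 0 := by nlinarith
  intro s
  have := le_sup' (V - W) (mem_univ s)
  simp only [Pi.sub_apply] at this
  linarith

theorem le_of_isFixedPt_of_le_map (hmono : Monotone T)
    (hshift : ∀ f c, T (f + fun _ => c) = T f + fun _ => γ * c) (hγ : γ < 1)
    (hV : Function.IsFixedPt T V) {L : S → ℝ} (hL : L ≤ T L) : L ≤ V := by
  -- apply `le_of_isFixedPt_of_map_le` to the conjugate operator `f ↦ -T (-f)`
  have hmono' : Monotone fun f => -T (-f) := fun f g hfg => neg_le_neg (hmono (neg_le_neg hfg))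
  have hshift' : ∀ f c, (fun f => -T (-f)) (f + fun _ => c) = -T (-f) + fun _ => γ * c := by
    intro f c
    have : -(f + fun _ => c) = -f + fun _ => -c := by ext; simp [add_comm]
    simp only [this, hshift]
    ext; simp only [Pi.add_apply, Pi.neg_apply, mul_neg]; ring
  have hfix' : Function.IsFixedPt (fun f => -T (-f)) (-V) := by
    simp [Function.IsFixedPt, hV.eq]
  exact neg_le_neg_iff.mp (le_of_isFixedPt_of_map_le hmono' hshift' hγ hfix' (W := -L)
    (by simpa using hL))

end Comparison

section WeightedAverage

variable {S : Type*} [Fintype S] [Nonempty S] {w : S → ℝ}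

theorem sum_mul_le_sup' (hw0 : ∀ s, 0 ≤ w s) (hw1 : ∑ s, w s = 1) (f : S → ℝ) :
    ∑ s, w s * f s ≤ univ.sup' univ_nonempty f :=
  calc ∑ s, w s * f s ≤ ∑ s, w s * univ.sup' univ_nonempty f :=
        sum_le_sum fun s _ => mul_le_mul_of_nonneg_left (le_sup' f (mem_univ s)) (hw0 s)
    _ = univ.sup' univ_nonempty f := by rw [← sum_mul, hw1, one_mul]

theorem inf'_le_sum_mul (hw0 : ∀ s, 0 ≤ w s) (hw1 : ∑ s, w s = 1) (f : S → ℝ) :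
    univ.inf' univ_nonempty f ≤ ∑ s, w s * f s :=
  calc univ.inf' univ_nonempty f = ∑ s, w s * univ.inf' univ_nonempty f := by
        rw [← sum_mul, hw1, one_mul]
    _ ≤ ∑ s, w s * f s :=
        sum_le_sum fun s _ => mul_le_mul_of_nonneg_left (inf'_le f (mem_univ s)) (hw0 s)

end WeightedAverage

section DiscountedBellman

variable {S A : Type*} [Fintype S] [Fintype A] [Nonempty A]

noncomputable def discountedBellman (r : S → A → ℝ) (p : S → A → S → ℝ) (γ : ℝ)
    (f : S → ℝ) (s : S) : ℝ :=
  univ.sup' univ_nonempty fun a => r s a + γ * ∑ s', p s a s' * f s'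

variable {r : S → A → ℝ} {p : S → A → S → ℝ} {γ : ℝ}

theorem discountedBellman_monotone (hp0 : ∀ s a s', 0 ≤ p s a s') (hγ0 : 0 ≤ γ) :
    Monotone (discountedBellman r p γ) := fun f g hfg s =>
  sup'_mono_fun fun a _ => by
    gcongr with s'
    exacts [hp0 s a s', hfg s']

theorem discountedBellman_add_const (hp1 : ∀ s a, ∑ s', p s a s' = 1) (f : S → ℝ) (c : ℝ) :
    discountedBellman r p γ (f + fun _ => c) = discountedBellman r p γ f + fun _ => γ * c := by
  ext s
  simp only [discountedBellman, Pi.add_apply, sup'_add]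
  congr 1
  ext a
  simp only [mul_add, sum_add_distrib, ← sum_mul, hp1, one_mul]
  ring

variable [Nonempty S] {Jstar : ℝ} {qstar : S → A → ℝ} {vstar : S → ℝ}

theorem discountedBellman_le_of_averageReward (hp0 : ∀ s a s', 0 ≤ p s a s')
    (hp1 : ∀ s a, ∑ s', p s a s' = 1) (hγ1 : γ < 1)
    (hv : ∀ s, vstar s = univ.sup' univ_nonempty (fun a => qstar s a))
    (hbell : ∀ s a, Jstar + qstar s a = r s a + ∑ s', p s a s' * vstar s') (s : S) :
    discountedBellman r p γ vstar s ≤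
      Jstar + vstar s - (1 - γ) * univ.inf' univ_nonempty vstar :=
  sup'_le _ _ fun a _ => by
    have hq : qstar s a ≤ vstar s := hv s ▸ le_sup' (qstar s) (mem_univ a)
    have hm := inf'_le_sum_mul (hp0 s a) (hp1 s a) vstar
    nlinarith [hbell s a]

theorem le_discountedBellman_of_averageReward (hp0 : ∀ s a s', 0 ≤ p s a s')
    (hp1 : ∀ s a, ∑ s', p s a s' = 1) (hγ1 : γ < 1)
    (hv : ∀ s, vstar s = univ.sup' univ_nonempty (fun a => qstar s a))
    (hbell : ∀ s a, Jstar + qstar s a = r s a + ∑ s', p s a s' * vstar s') (s : S) :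
    Jstar + vstar s - (1 - γ) * univ.sup' univ_nonempty vstar ≤
      discountedBellman r p γ vstar s := by
  obtain ⟨a, -, ha⟩ := exists_mem_eq_sup' univ_nonempty (qstar s)
  have hM := sum_mul_le_sup' (hp0 s a) (hp1 s a) vstar
  refine le_sup'_of_le _ (mem_univ a) ?_
  nlinarith [hbell s a, hv s]

end DiscountedBellman

/-- The span of the discounted optimal value function is at most twice the span
of the average-reward optimal value function. -/
theorem discounted_span_bound
    {S A : Type*} [Fintype S] [Fintype A] [Nonempty S] [Nonempty A]
    (r : S → A → ℝ) (p : S → A → S → ℝ)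
    (hp0 : ∀ s a s', 0 ≤ p s a s') (hp1 : ∀ s a, ∑ s', p s a s' = 1)
    (γ : ℝ) (hγ0 : 0 ≤ γ) (hγ1 : γ < 1)
    (Jstar : ℝ) (qstar : S → A → ℝ) (vstar : S → ℝ)
    (hv : ∀ s, vstar s = univ.sup' univ_nonempty (fun a => qstar s a))
    (hbell : ∀ s a, Jstar + qstar s a = r s a + ∑ s', p s a s' * vstar s')
    (Qstar : S → A → ℝ) (Vstar : S → ℝ)
    (hQ : ∀ s a, Qstar s a = r s a + γ * ∑ s', p s a s' * Vstar s')
    (hV : ∀ s, Vstar s = univ.sup' univ_nonempty (fun a => Qstar s a)) :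
    univ.sup' univ_nonempty Vstar - univ.inf' univ_nonempty Vstar ≤
      2 * (univ.sup' univ_nonempty vstar - univ.inf' univ_nonempty vstar) := by
  set T := discountedBellman r p γ
  have hmono : Monotone T := discountedBellman_monotone hp0 hγ0
  have hshift := discountedBellman_add_const (r := r) (γ := γ) hp1
  have hfix : Function.IsFixedPt T Vstar := funext fun s => by
    rw [hV s]; simp only [T, discountedBellman, hQ]
  set m := univ.inf' univ_nonempty vstar
  set M := univ.sup' univ_nonempty vstar
  set c := Jstar / (1 - γ)
  have hc : Jstar + γ * c = c := by
    have := (sub_pos.mpr hγ1).ne'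
    simp only [c]
    field_simp
    ring
  have hupper : Vstar ≤ vstar + fun _ => c - m :=
    le_of_isFixedPt_of_map_le hmono hshift hγ1 hfix fun s => by
      have := discountedBellman_le_of_averageReward hp0 hp1 hγ1 hv hbell s
      simp only [T, hshift, Pi.add_apply]
      linarith
  have hlower : (vstar + fun _ => c - M) ≤ Vstar :=
    le_of_isFixedPt_of_le_map hmono hshift hγ1 hfix fun s => by
      have := le_discountedBellman_of_averageReward hp0 hp1 hγ1 hv hbell s
      simp only [T, hshift, Pi.add_apply]
      linarith
  have hsup : univ.sup' univ_nonempty Vstar ≤ M + (c - m) :=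
    sup'_le _ _ fun s _ => (hupper s).trans (add_le_add_left (le_sup' vstar (mem_univ s)) _)
  have hinf : m + (c - M) ≤ univ.inf' univ_nonempty Vstar :=
    le_inf' _ _ fun s _ => (add_le_add_left (inf'_le vstar (mem_univ s)) _).trans (hlower s)
  linarith
end

section
/- Let H ≥ 1 be an integer and define the step sizes α_t = (H+1)/(H+t) for integers t ≥ 1, and for 1 ≤ i ≤ τ set α_τ^i := α_i · ∏_{j=i+1}^{τ} (1 − α_j). Then for every integer τ ≥ 1, 1/√τ ≤ Σ_{i=1}^{τ} α_τ^i / √i ≤ 2/√τ. -/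
/-!
Writing `S τ = ∑ i ∈ [1, τ], α_τ^i / √i`, the weights satisfy `α_{τ+1}^i = (1 - α_{τ+1}) α_τ^i`
for `i ≤ τ` and `α_{τ+1}^{τ+1} = α_{τ+1}`, so `S (τ+1) = (1 - α_{τ+1}) S τ + α_{τ+1} / √(τ+1)`,
with `S 1 = 1` since `α_1 = 1`. Both bounds then follow by induction: the lower one because
`1/√τ` is decreasing and the new value is a convex combination, the upper one because
`1 - α_{τ+1} = τ / (H+τ+1)` turns the step into `2 √τ √(τ+1) ≤ 2τ + 1 + H`, i.e. AM-GM.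
-/

open Finset

def stepWeight {R : Type*} [CommRing R] (α : ℕ → R) (τ i : ℕ) : R :=
  α i * ∏ j ∈ Icc (i + 1) τ, (1 - α j)

section StepWeight

variable {R : Type*} [CommRing R] (α : ℕ → R)

theorem stepWeight_self (τ : ℕ) : stepWeight α τ τ = α τ := by
  simp [stepWeight]

theorem stepWeight_succ_of_le {τ i : ℕ} (hi : i ≤ τ) :
    stepWeight α (τ + 1) i = (1 - α (τ + 1)) * stepWeight α τ i := by
  rw [stepWeight, prod_Icc_succ_top (by omega), stepWeight]
  ring

theorem sum_stepWeight_mul_succ (x : ℕ → R) (τ : ℕ) :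
    ∑ i ∈ Icc 1 (τ + 1), stepWeight α (τ + 1) i * x i =
      (1 - α (τ + 1)) * ∑ i ∈ Icc 1 τ, stepWeight α τ i * x i + α (τ + 1) * x (τ + 1) := by
  rw [sum_Icc_succ_top (by omega), stepWeight_self, mul_sum]
  congr 1
  refine sum_congr rfl fun i hi => ?_
  rw [stepWeight_succ_of_le α (mem_Icc.mp hi).2, mul_assoc]

end StepWeight

noncomputable def stepSize (H t : ℕ) : ℝ := (H + 1) / (H + t)

section StepSize

variable (H : ℕ)

theorem stepSize_one : stepSize H 1 = 1 := by
  rw [stepSize, Nat.cast_one]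
  exact div_self (by positivity)

theorem stepSize_succ (n : ℕ) : stepSize H (n + 1) = (H + 1) / (H + n + 1) := by
  rw [stepSize]; push_cast; ring_nf

theorem one_sub_stepSize_succ (n : ℕ) : 1 - stepSize H (n + 1) = n / (H + n + 1) := by
  rw [stepSize_succ]; field_simp; ring

theorem stepSize_succ_mem_Icc (n : ℕ) : stepSize H (n + 1) ∈ Set.Icc (0 : ℝ) 1 := by
  rw [stepSize_succ]
  refine ⟨by positivity, (div_le_one (by positivity)).mpr ?_⟩
  linarith [(n.cast_nonneg : (0 : ℝ) ≤ n)]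

theorem sqrt_lower_step (n : ℕ) (hn : 1 ≤ n) {S : ℝ} (hS : 1 / √(n : ℝ) ≤ S) :
    1 / √((n : ℝ) + 1) ≤
      (1 - stepSize H (n + 1)) * S + stepSize H (n + 1) * (1 / √((n : ℝ) + 1)) := by
  obtain ⟨ha0, ha1⟩ := stepSize_succ_mem_Icc H n
  have hdecr : 1 / √((n : ℝ) + 1) ≤ 1 / √(n : ℝ) :=
    one_div_le_one_div_of_le (by positivity) (Real.sqrt_le_sqrt (by linarith))
  nlinarith

theorem sqrt_upper_step (n : ℕ) (hn : 1 ≤ n) {S : ℝ} (hS : S ≤ 2 / √(n : ℝ)) :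
    (1 - stepSize H (n + 1)) * S + stepSize H (n + 1) * (1 / √((n : ℝ) + 1)) ≤
      2 / √((n : ℝ) + 1) := by
  have hs : 0 < √(n : ℝ) := Real.sqrt_pos.mpr (by exact_mod_cast hn)
  have ht : 0 < √((n : ℝ) + 1) := Real.sqrt_pos.mpr (by positivity)
  have hs2 : √(n : ℝ) ^ 2 = n := Real.sq_sqrt n.cast_nonneg
  have ht2 : √((n : ℝ) + 1) ^ 2 = n + 1 := Real.sq_sqrt (by positivity)
  have amgm := two_mul_le_add_sq (√(n : ℝ)) (√((n : ℝ) + 1))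
  have hH : (0 : ℝ) ≤ H := H.cast_nonneg
  calc (1 - stepSize H (n + 1)) * S + stepSize H (n + 1) * (1 / √((n : ℝ) + 1))
      ≤ (1 - stepSize H (n + 1)) * (2 / √(n : ℝ)) +
          stepSize H (n + 1) * (1 / √((n : ℝ) + 1)) := by
        gcongr
        exact sub_nonneg.mpr (stepSize_succ_mem_Icc H n).2
    _ = (2 * √(n : ℝ) * √((n : ℝ) + 1) + H + 1) / ((H + n + 1) * √((n : ℝ) + 1)) := by
        rw [one_sub_stepSize_succ, stepSize_succ]
        field_simp
        linear_combination (-2 * √((n : ℝ) + 1)) * hs2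
    _ ≤ 2 / √((n : ℝ) + 1) := by
        rw [div_le_div_iff₀ (by positivity) ht]
        nlinarith

end StepSize

theorem stepsize_weights_sqrt_bounds_general
    (H : ℕ)
    (α : ℕ → ℝ) (hα : ∀ t, α t = ((H : ℝ) + 1) / ((H : ℝ) + t))
    (w : ℕ → ℕ → ℝ)
    (hw : ∀ τ i, w τ i = α i * ∏ j ∈ Icc (i + 1) τ, (1 - α j)) :
    ∀ τ : ℕ, 1 ≤ τ →
      1 / Real.sqrt τ ≤ ∑ i ∈ Icc 1 τ, w τ i / Real.sqrt i ∧
      ∑ i ∈ Icc 1 τ, w τ i / Real.sqrt i ≤ 2 / Real.sqrt τ := by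
  obtain rfl : α = stepSize H := funext hα
  obtain rfl : w = stepWeight (stepSize H) := funext fun τ => funext (hw τ)
  intro τ hτ
  simp_rw [div_eq_mul_one_div (stepWeight _ _ _)]
  induction τ, hτ using Nat.le_induction with
  | base => simp [stepWeight_self, stepSize_one]
  | succ n hn ih =>
    rw [sum_stepWeight_mul_succ]
    push_cast
    exact ⟨sqrt_lower_step H n hn ih.1, sqrt_upper_step H n hn ih.2⟩

/-- Property 1 of the step-size weights of Jin et al. (2018):
`1/√τ ≤ Σ_{i=1}^τ α_τ^i / √i ≤ 2/√τ`. -/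
theorem stepsize_weights_sqrt_bounds
    (H : ℕ) (hH : 1 ≤ H)
    (α : ℕ → ℝ) (hα : ∀ t, α t = ((H : ℝ) + 1) / ((H : ℝ) + t))
    (w : ℕ → ℕ → ℝ)
    (hw : ∀ τ i, w τ i = α i * ∏ j ∈ Icc (i + 1) τ, (1 - α j)) :
    ∀ τ : ℕ, 1 ≤ τ →
      1 / Real.sqrt τ ≤ ∑ i ∈ Icc 1 τ, w τ i / Real.sqrt i ∧
      ∑ i ∈ Icc 1 τ, w τ i / Real.sqrt i ≤ 2 / Real.sqrt τ :=
  stepsize_weights_sqrt_bounds_general H α hα w hw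
end

section
/- Let H ≥ 1 be an integer and define α_t = (H+1)/(H+t) for integers t ≥ 1, and for 1 ≤ i ≤ τ set α_τ^i := α_i · ∏_{j=i+1}^{τ} (1 − α_j). Then for every integer i ≥ 1, the series Σ_{τ=i}^{∞} α_τ^i converges and Σ_{τ=i}^{∞} α_τ^i = 1 + 1/H. -/
/-!
Writing `(x)ₙ` for the rising factorial, the weights are `w (i + n) i = α i * (i)ₙ / (H + i + 1)ₙ`,
so the claim is Gauss's summation `∑ₙ (a)ₙ / (b)ₙ = (b - 1) / (b - a - 1)` at `a = i`,
`b = H + i + 1`. With `rₙ = (a)ₙ / (b)ₙ`, the identity `(b + n) rₙ₊₁ = (a + n) rₙ` makes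
`(b - a - 1) rₙ = (b - 1 + n) rₙ - (b + n) rₙ₊₁` telescope, and the remainder `(b - 1 + n) rₙ`
is `O(1 / n)` once `b ≥ a + 2`, because `(a + n) (b - 1 + n) rₙ` is then nonincreasing.
-/

open Finset Filter Polynomial

noncomputable def pochhammerRatio (a b : ℝ) (n : ℕ) : ℝ :=
  (ascPochhammer ℝ n).eval a / (ascPochhammer ℝ n).eval b

section PochhammerRatio

variable {a b : ℝ}

@[simp]
theorem pochhammerRatio_zero : pochhammerRatio a b 0 = 1 := by
  simp [pochhammerRatio]

theorem pochhammerRatio_succ (n : ℕ) :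
    pochhammerRatio a b (n + 1) = pochhammerRatio a b n * ((a + n) / (b + n)) := by
  simp only [pochhammerRatio, ascPochhammer_succ_eval, mul_div_mul_comm]

theorem pochhammerRatio_nonneg (ha : 0 ≤ a) (hb : 0 ≤ b) (n : ℕ) : 0 ≤ pochhammerRatio a b n := by
  induction n with
  | zero => simp
  | succ n ih =>
    rw [pochhammerRatio_succ]
    exact mul_nonneg ih (div_nonneg (by positivity) (by positivity))

theorem add_mul_pochhammerRatio_succ (hb : 0 < b) (n : ℕ) :
    (b + n) * pochhammerRatio a b (n + 1) = (a + n) * pochhammerRatio a b n := by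
  rw [pochhammerRatio_succ]
  field_simp

theorem sub_mul_sum_range_pochhammerRatio (hb : 0 < b) (N : ℕ) :
    (b - a - 1) * ∑ n ∈ range N, pochhammerRatio a b n
      = (b - 1) - (b - 1 + N) * pochhammerRatio a b N := by
  induction N with
  | zero => simp
  | succ N ih =>
    rw [sum_range_succ, mul_add, ih, Nat.cast_succ, show b - 1 + (N + 1) = b + N by ring,
      add_mul_pochhammerRatio_succ hb]
    ring

theorem mul_sub_one_add_mul_pochhammerRatio_le (ha : 0 ≤ a) (hab : a + 2 ≤ b) (n : ℕ) :
    (a + n) * ((b - 1 + n) * pochhammerRatio a b n) ≤ a * (b - 1) := by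
  have hb : 0 < b := by linarith
  let Q : ℕ → ℝ := fun n ↦ (a + n) * ((b - 1 + n) * pochhammerRatio a b n)
  have hQ : Antitone Q := by
    refine antitone_nat_of_succ_le fun n ↦ ?_
    have hr := pochhammerRatio_nonneg ha hb.le n
    have hQ_succ : Q (n + 1) = (a + n + 1) * ((a + n) * pochhammerRatio a b n) := by
      simp only [Q, ← add_mul_pochhammerRatio_succ hb]
      push_cast
      ring
    rw [hQ_succ]
    calc (a + n + 1) * ((a + n) * pochhammerRatio a b n)
        ≤ (b - 1 + n) * ((a + n) * pochhammerRatio a b n) :=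
          mul_le_mul_of_nonneg_right (by linarith) (by positivity)
      _ = Q n := by ring
  simpa [Q] using hQ (Nat.zero_le n)

theorem tendsto_sub_one_add_mul_pochhammerRatio (ha : 0 < a) (hab : a + 2 ≤ b) :
    Tendsto (fun n : ℕ ↦ (b - 1 + n) * pochhammerRatio a b n) atTop (nhds 0) := by
  have hb : 0 < b := by linarith
  refine squeeze_zero (g := fun n : ℕ ↦ a * (b - 1) / (a + n)) (fun n ↦ ?_) (fun n ↦ ?_) ?_
  · have := pochhammerRatio_nonneg ha.le hb.le n
    have : 0 ≤ b - 1 + n := by linarith [n.cast_nonneg (α := ℝ)]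
    positivity
  · rw [le_div_iff₀ (by positivity), mul_comm]
    exact mul_sub_one_add_mul_pochhammerRatio_le ha.le hab n
  · exact tendsto_const_nhds.div_atTop (tendsto_atTop_add_const_left _ _ tendsto_natCast_atTop_atTop)

theorem hasSum_pochhammerRatio (ha : 0 < a) (hab : a + 2 ≤ b) :
    HasSum (pochhammerRatio a b) ((b - 1) / (b - a - 1)) := by
  have hb : 0 < b := by linarith
  have hbaa : b - a - 1 ≠ 0 := by linarith
  rw [hasSum_iff_tendsto_nat_of_nonneg (pochhammerRatio_nonneg ha.le hb.le)]
  have hpartial : ∀ N, ∑ n ∈ range N, pochhammerRatio a b n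
      = ((b - 1) - (b - 1 + N) * pochhammerRatio a b N) / (b - a - 1) := fun N ↦ by
    rw [← sub_mul_sum_range_pochhammerRatio hb, mul_div_cancel_left₀ _ hbaa]
  simp only [hpartial]
  simpa using ((tendsto_sub_one_add_mul_pochhammerRatio ha hab).const_sub (b - 1)).div_const _

end PochhammerRatio

theorem prod_one_sub_stepsize_eq_pochhammerRatio {h : ℝ} (hh : 0 ≤ h) {α : ℕ → ℝ}
    (hα : ∀ t : ℕ, α t = (h + 1) / (h + t)) (i n : ℕ) :
    ∏ j ∈ Icc (i + 1) (i + n), (1 - α j) = pochhammerRatio i (h + i + 1) n := by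
  induction n with
  | zero => simp
  | succ n ih =>
    rw [← add_assoc, prod_Icc_succ_top (by omega), ih, pochhammerRatio_succ, hα]
    have : h + ((i + n + 1 : ℕ) : ℝ) ≠ 0 := by positivity
    field_simp
    push_cast
    ring

/-- Property 3 (second part) of the step-size weights of Jin et al. (2018):
for every `i ≥ 1`, the series `Σ_{τ=i}^∞ α_τ^i` converges to `1 + 1/H`. -/
theorem stepsize_weights_tail_sum
    (H : ℕ) (hH : 1 ≤ H)
    (α : ℕ → ℝ) (hα : ∀ t, α t = ((H : ℝ) + 1) / ((H : ℝ) + t))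
    (w : ℕ → ℕ → ℝ)
    (hw : ∀ τ i, w τ i = α i * ∏ j ∈ Icc (i + 1) τ, (1 - α j)) :
    ∀ i : ℕ, 1 ≤ i →
      HasSum (fun n : ℕ => w (i + n) i) (1 + 1 / (H : ℝ)) := by
  intro i hi
  have hH' : (1 : ℝ) ≤ H := by exact_mod_cast hH
  have hi' : (0 : ℝ) < i := by exact_mod_cast hi
  have hsum := (hasSum_pochhammerRatio hi' (b := H + i + 1) (by linarith)).mul_left (α i)
  have hweights : (fun n ↦ w (i + n) i) = fun n ↦ α i * pochhammerRatio i (H + i + 1) n := by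
    funext n
    rw [hw, prod_one_sub_stepsize_eq_pochhammerRatio (by positivity) hα]
  have hvalue : α i * ((H + i + 1 - 1) / (H + i + 1 - i - 1)) = 1 + 1 / (H : ℝ) := by
    rw [hα, add_sub_cancel_right, show (H : ℝ) + i + 1 - i - 1 = H by ring]
    field_simp
  rwa [hweights, ← hvalue]
end

section
/- Let X be a finite set of cardinality m ≥ 1, let T ≥ 1 be an integer, and let f : {1,…,T} → X be any function. For each t ∈ {1,…,T} define the visit count n_t := #{ i : 1 ≤ i ≤ t, f(i) = f(t) } (so n_t ≥ 1). Then Σ_{t=1}^{T} 1/√(n_t) ≤ 2√(m·T). -/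
open Finset

/-- key: 2√(k-1) + 1/√k ≤ 2√k for k ≥ 1 -/
lemma step_ineq (k : ℕ) (hk : 1 ≤ k) :
    2 * Real.sqrt ((k : ℝ) - 1) + 1 / Real.sqrt k ≤ 2 * Real.sqrt k := by
  have hk1 : (1:ℝ) ≤ (k:ℝ) := by exact_mod_cast hk
  set a := Real.sqrt ((k:ℝ) - 1) with ha
  set b := Real.sqrt k with hb
  have ha0 : 0 ≤ a := Real.sqrt_nonneg _
  have hb1 : 1 ≤ b := by
    rw [hb, show (1:ℝ) = Real.sqrt 1 by simp]
    exact Real.sqrt_le_sqrt hk1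
  have hb0 : 0 < b := lt_of_lt_of_le one_pos hb1
  have ha2 : a ^ 2 = (k:ℝ) - 1 := Real.sq_sqrt (by linarith)
  have hb2 : b ^ 2 = (k:ℝ) := Real.sq_sqrt (by linarith)
  have h : 1 / b ≤ 2 * b - 2 * a := by
    rw [div_le_iff₀ hb0]
    nlinarith [sq_nonneg (a - b)]
  linarith

/-- rank sum over a finite set of naturals -/
lemma rank_sum (S : Finset ℕ) :
    ∑ t ∈ S, (1:ℝ) / Real.sqrt ((S.filter (· ≤ t)).card) ≤ 2 * Real.sqrt S.card := by
  induction S using Finset.strongInduction with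
  | _ S ih =>
    rcases S.eq_empty_or_nonempty with rfl | hS
    · simp
    · set M := S.max' hS with hM
      have hMS : M ∈ S := S.max'_mem hS
      set S' := S.erase M with hS'
      have hss : S' ⊂ S := Finset.erase_ssubset hMS
      have key : ∀ t ∈ S', S.filter (· ≤ t) = S'.filter (· ≤ t) := by
        intro t ht
        ext i
        simp only [mem_filter, hS', mem_erase]
        constructor
        · rintro ⟨hi, hit⟩
          refine ⟨⟨?_, hi⟩, hit⟩
          rintro rfl
          exact (Finset.ne_of_mem_erase ht) (le_antisymm (S.le_max' t (Finset.mem_of_mem_erase ht)) hit)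
        · rintro ⟨⟨_, hi⟩, hit⟩; exact ⟨hi, hit⟩
      have hfM : S.filter (· ≤ M) = S := by
        apply Finset.filter_true_of_mem
        intro i hi; exact S.le_max' i hi
      have hcard : S.card = S'.card + 1 := by
        have hpos : 0 < S.card := Finset.card_pos.mpr hS
        rw [hS', Finset.card_erase_of_mem hMS]
        omega
      have hsplit : ∑ t ∈ S, (1:ℝ) / Real.sqrt ((S.filter (· ≤ t)).card)
          = ∑ t ∈ S', (1:ℝ) / Real.sqrt ((S.filter (· ≤ t)).card)
            + 1 / Real.sqrt ((S.filter (· ≤ M)).card) := by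
        rw [← Finset.sum_erase_add S _ hMS]
      rw [hsplit, hfM]
      have h1 : ∑ t ∈ S', (1:ℝ) / Real.sqrt ((S.filter (· ≤ t)).card)
          = ∑ t ∈ S', (1:ℝ) / Real.sqrt ((S'.filter (· ≤ t)).card) := by
        apply Finset.sum_congr rfl
        intro t ht; rw [key t ht]
      rw [h1]
      have h2 := ih S' hss
      have h3 := step_ineq S.card (by rw [hcard]; omega)
      have h4 : ((S.card : ℝ) - 1) = (S'.card : ℝ) := by
        rw [hcard]; push_cast; ring
      rw [h4] at h3
      linarith

/-- The pigeonhole-type bound `Σ_{t=1}^T 1/√(n_t) ≤ 2√(m T)`, where `n_t` counts the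
number of times `1 ≤ i ≤ t` with `f i = f t`. -/
theorem sum_inv_sqrt_visit_counts
    {X : Type*} [Fintype X] [DecidableEq X]
    (m : ℕ) (hm : m = Fintype.card X) (hm1 : 1 ≤ m)
    (T : ℕ) (hT : 1 ≤ T) (f : ℕ → X) :
    ∑ t ∈ Icc 1 T,
        (1 : ℝ) / Real.sqrt (((Icc 1 t).filter (fun i => f i = f t)).card) ≤
      2 * Real.sqrt ((m : ℝ) * T) := by
  classical
  -- group by fiber
  have hfib : ∑ t ∈ Icc 1 T,
        (1 : ℝ) / Real.sqrt (((Icc 1 t).filter (fun i => f i = f t)).card)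
      = ∑ x : X, ∑ t ∈ (Icc 1 T).filter (fun t => f t = x),
        (1 : ℝ) / Real.sqrt (((Icc 1 t).filter (fun i => f i = f t)).card) :=
    (Finset.sum_fiberwise (Icc 1 T) f _).symm
  rw [hfib]
  -- rewrite each inner count as rank in the fiber
  have hinner : ∀ x : X, ∀ t ∈ (Icc 1 T).filter (fun t => f t = x),
      (Icc 1 t).filter (fun i => f i = f t)
        = ((Icc 1 T).filter (fun t => f t = x)).filter (· ≤ t) := by
    intro x t ht
    simp only [mem_filter, mem_Icc] at ht
    obtain ⟨⟨ht1, htT⟩, hftx⟩ := ht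
    ext i
    simp only [mem_filter, mem_Icc]
    constructor
    · rintro ⟨⟨hi1, hit⟩, hfi⟩
      exact ⟨⟨⟨hi1, le_trans hit htT⟩, hftx ▸ hfi⟩, hit⟩
    · rintro ⟨⟨⟨hi1, _⟩, hfi⟩, hit⟩
      exact ⟨⟨hi1, hit⟩, hftx ▸ hfi⟩
  have hbound : ∀ x : X,
      ∑ t ∈ (Icc 1 T).filter (fun t => f t = x),
        (1 : ℝ) / Real.sqrt (((Icc 1 t).filter (fun i => f i = f t)).card)
      ≤ 2 * Real.sqrt (((Icc 1 T).filter (fun t => f t = x)).card) := by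
    intro x
    calc ∑ t ∈ (Icc 1 T).filter (fun t => f t = x),
          (1 : ℝ) / Real.sqrt (((Icc 1 t).filter (fun i => f i = f t)).card)
        = ∑ t ∈ (Icc 1 T).filter (fun t => f t = x),
          (1 : ℝ) / Real.sqrt ((((Icc 1 T).filter (fun t => f t = x)).filter (· ≤ t)).card) := by
          apply Finset.sum_congr rfl; intro t ht; rw [hinner x t ht]
      _ ≤ _ := rank_sum _
  calc ∑ x : X, ∑ t ∈ (Icc 1 T).filter (fun t => f t = x),
        (1 : ℝ) / Real.sqrt (((Icc 1 t).filter (fun i => f i = f t)).card)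
      ≤ ∑ x : X, 2 * Real.sqrt (((Icc 1 T).filter (fun t => f t = x)).card) :=
        Finset.sum_le_sum (fun x _ => hbound x)
    _ = 2 * ∑ x : X, Real.sqrt (((Icc 1 T).filter (fun t => f t = x)).card) := by
        rw [Finset.mul_sum]
    _ ≤ 2 * Real.sqrt ((m : ℝ) * T) := by
        gcongr 2 * ?_
        -- Cauchy-Schwarz
        have hcs : (∑ x : X, Real.sqrt (((Icc 1 T).filter (fun t => f t = x)).card)) ^ 2
            ≤ (Fintype.card X : ℝ) * ∑ x : X, (((Icc 1 T).filter (fun t => f t = x)).card : ℝ) := by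
          have := sq_sum_le_card_mul_sum_sq
            (s := Finset.univ (α := X))
            (f := fun x => Real.sqrt (((Icc 1 T).filter (fun t => f t = x)).card))
          simp only [Finset.card_univ] at this
          calc _ ≤ (Fintype.card X : ℝ) * ∑ x : X,
                (Real.sqrt (((Icc 1 T).filter (fun t => f t = x)).card)) ^ 2 := this
            _ = _ := by
                congr 1
                apply Finset.sum_congr rfl
                intro x _
                exact Real.sq_sqrt (Nat.cast_nonneg _)
        have hsum : ∑ x : X, (((Icc 1 T).filter (fun t => f t = x)).card : ℝ) = (T : ℝ) := by
          have := Finset.card_eq_sum_card_fiberwise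
            (s := Icc 1 T) (t := Finset.univ) (f := f) (fun a _ => Finset.mem_univ _)
          rw [Nat.card_Icc] at this
          have hT2 : T = ∑ b : X, ((Icc 1 T).filter (fun a => f a = b)).card := by omega
          rw [show ((T:ℝ)) = ((∑ b : X, ((Icc 1 T).filter (fun a => f a = b)).card : ℕ) : ℝ) from by exact_mod_cast hT2]
          push_cast
          ring
        rw [hsum, ← hm] at hcs
        have hnn : 0 ≤ ∑ x : X, Real.sqrt (((Icc 1 T).filter (fun t => f t = x)).card) :=
          Finset.sum_nonneg (fun x _ => Real.sqrt_nonneg _)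
        calc ∑ x : X, Real.sqrt (((Icc 1 T).filter (fun t => f t = x)).card)
            = Real.sqrt ((∑ x : X, Real.sqrt (((Icc 1 T).filter (fun t => f t = x)).card))^2) := by
              rw [Real.sqrt_sq hnn]
          _ ≤ Real.sqrt ((m:ℝ) * T) := Real.sqrt_le_sqrt hcs
end

section
/- Let A ≥ 1 be an integer, η > 0, C > 0 with η ≤ 1/(270·C). Let ψ(x) := (1/η) Σ_{a=1}^{A} log(1/x(a)) be the log-barrier regularizer on vectors x ∈ ℝ^A with positive coordinates, and let D_ψ(x, x') := ψ(x) − ψ(x') − ⟨∇ψ(x'), x − x'⟩ = (1/η) Σ_a [ log(x'(a)/x(a)) + x(a)/x'(a) − 1 ] be the associated Bregman divergence. Let Δ_A⁺ denote the set of probability vectors in ℝ^A with all coordinates positive. Let a₀ ∈ Δ_A⁺, b₁, b₂ ∈ ℝ^A, and suppose a₁ ∈ Δ_A⁺ minimizes F₁(a) := ⟨a, b₁⟩ + D_ψ(a, a₀) over Δ_A⁺, and a₂ ∈ Δ_A⁺ minimizes F₂(a) := ⟨a, b₂⟩ + D_ψ(a, a₀) over Δ_A⁺. If √( Σ_a η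 · a₁(a)² · (b₁(a) − b₂(a))² ) ≤ 12 √η · C, then |a₂(i) − a₁(i)| ≤ 60 η C · a₁(i) for every coordinate i. -/
/-!
Both minimizers lie in the relative interior of the simplex, so the gradient of each objective is
orthogonal to every zero-sum direction. Testing the two first-order conditions against `a₂ - a₁`
and adding them, the `1 / a₀` terms cancel and
`∑ (a₂ - a₁)² / (a₁ a₂) = η ⟪a₂ - a₁, b₁ - b₂⟫`.
Cauchy–Schwarz with weights `a₁ a₂` bounds the left side by `η² ρ ‖a₁ (b₁ - b₂)‖² ≤ 144 η² C² ρ`,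
where `a₂ ≤ ρ a₁`, which gives `|a₂ - a₁| ≤ 12 η C ρ a₁` coordinatewise. Taking `ρ` to be the
largest ratio `a₂ / a₁` and reading the bound at a coordinate attaining it yields
`ρ ≤ 1 / (1 - 12 η C)`, and `12 η C / (1 - 12 η C) ≤ 60 η C` since `η C ≤ 1 / 270`.
-/

open Finset Topology

section

variable {ι : Type*} [Fintype ι]

noncomputable def logBarrierBregman (η : ℝ) (x x' : ι → ℝ) : ℝ :=
  (1 / η) * ∑ a, (Real.log (x' a / x a) + x a / x' a - 1)

noncomputable def mirrorStepObjective (η : ℝ) (b x₀ x : ι → ℝ) : ℝ :=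
  (∑ a, x a * b a) + logBarrierBregman η x x₀

theorem hasDerivAt_logBarrierBregman_line (η : ℝ) {x x₀ : ι → ℝ} (d : ι → ℝ)
    (hx : ∀ a, 0 < x a) (hx₀ : ∀ a, 0 < x₀ a) :
    HasDerivAt (fun t : ℝ => logBarrierBregman η (x + t • d) x₀)
      ((1 / η) * ∑ a, d a * (1 / x₀ a - 1 / x a)) 0 := by
  unfold logBarrierBregman
  refine HasDerivAt.const_mul _ (HasDerivAt.fun_sum fun a _ => ?_)
  have hline : HasDerivAt (fun t : ℝ => x a + t * d a) (d a) 0 := by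
    simpa using ((hasDerivAt_id (0 : ℝ)).mul_const (d a)).const_add (x a)
  have hlog := ((hline.inv (by simpa using (hx a).ne')).const_mul (x₀ a)).log
    (by simpa using (div_pos (hx₀ a) (hx a)).ne')
  simp only [Pi.inv_apply, zero_mul, add_zero] at hlog
  convert (hlog.add (hline.div_const (x₀ a))).sub_const 1 using 1
  · ext t; simp [div_eq_mul_inv]
  · have := (hx a).ne'; have := (hx₀ a).ne'
    field_simp
    ring

theorem eq_zero_of_hasDerivAt_of_minimizes_posSimplex {F : (ι → ℝ) → ℝ} {x d : ι → ℝ}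
    {F' : ℝ}
    (hx : ∀ a, 0 < x a) (hd : ∑ a, d a = 0)
    (hmin : ∀ y : ι → ℝ, (∀ a, 0 < y a) → ∑ a, y a = ∑ a, x a → F x ≤ F y)
    (hF : HasDerivAt (fun t : ℝ => F (x + t • d)) F' 0) : F' = 0 := by
  refine IsLocalMin.hasDerivAt_eq_zero ?_ hF
  have hpos : ∀ᶠ t in 𝓝 (0 : ℝ), ∀ a, 0 < x a + t * d a := by
    refine Filter.eventually_all.2 fun a => ?_
    exact (continuous_const.add (continuous_id.mul continuous_const)).continuousAt.eventually
      (lt_mem_nhds (by simpa using hx a))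
  filter_upwards [hpos] with t ht
  rw [zero_smul, add_zero]
  exact hmin _ (by simpa using ht) (by simp [sum_add_distrib, ← mul_sum, hd])

theorem sum_mul_eq_zero_of_minimizes_mirrorStep (η : ℝ) {x₀ x b d : ι → ℝ}
    (hx₀ : ∀ a, 0 < x₀ a) (hx : ∀ a, 0 < x a) (hsum : ∑ a, x a = 1) (hd : ∑ a, d a = 0)
    (hmin : ∀ y : ι → ℝ, (∀ a, 0 < y a) → ∑ a, y a = 1 →
      mirrorStepObjective η b x₀ x ≤ mirrorStepObjective η b x₀ y) :
    ∑ a, d a * (b a + (1 / x₀ a - 1 / x a) / η) = 0 := by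
  have hlin : HasDerivAt (fun t : ℝ => ∑ a, (x + t • d) a * b a) (∑ a, d a * b a) 0 :=
    HasDerivAt.fun_sum fun a _ => by
      simpa using (((hasDerivAt_id (0 : ℝ)).mul_const (d a)).const_add (x a)).mul_const (b a)
  have hstat := eq_zero_of_hasDerivAt_of_minimizes_posSimplex hx hd
    (fun y hy hy1 => hmin y hy (hsum ▸ hy1))
    (hlin.fun_add (hasDerivAt_logBarrierBregman_line η d hx hx₀))
  rw [← hstat, mul_sum, ← sum_add_distrib]
  exact sum_congr rfl fun a _ => by ring

theorem sum_sq_div_mul_eq_of_minimizes_mirrorStep {η : ℝ} (hη : η ≠ 0)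
    {x₀ x₁ x₂ b₁ b₂ : ι → ℝ}
    (hx₀ : ∀ a, 0 < x₀ a) (hx₁ : ∀ a, 0 < x₁ a) (hx₂ : ∀ a, 0 < x₂ a)
    (hs₁ : ∑ a, x₁ a = 1) (hs₂ : ∑ a, x₂ a = 1)
    (hmin₁ : ∀ y : ι → ℝ, (∀ a, 0 < y a) → ∑ a, y a = 1 →
      mirrorStepObjective η b₁ x₀ x₁ ≤ mirrorStepObjective η b₁ x₀ y)
    (hmin₂ : ∀ y : ι → ℝ, (∀ a, 0 < y a) → ∑ a, y a = 1 →
      mirrorStepObjective η b₂ x₀ x₂ ≤ mirrorStepObjective η b₂ x₀ y) :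
    ∑ a, (x₂ a - x₁ a) ^ 2 / (x₁ a * x₂ a) = η * ∑ a, (x₂ a - x₁ a) * (b₁ a - b₂ a) := by
  have h₁ := sum_mul_eq_zero_of_minimizes_mirrorStep η hx₀ hx₁ hs₁
    (d := x₂ - x₁) (by simp [sum_sub_distrib, hs₁, hs₂]) hmin₁
  have h₂ := sum_mul_eq_zero_of_minimizes_mirrorStep η hx₀ hx₂ hs₂
    (d := x₁ - x₂) (by simp [sum_sub_distrib, hs₁, hs₂]) hmin₂
  have hsum : ∑ a, (η * ((x₂ a - x₁ a) * (b₁ a - b₂ a))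
      - (x₂ a - x₁ a) ^ 2 / (x₁ a * x₂ a)) = 0 := by
    rw [← mul_zero η, ← add_zero (0 : ℝ)]
    nth_rw 1 [← h₁, ← h₂]
    rw [← sum_add_distrib, mul_sum]
    refine sum_congr rfl fun a _ => ?_
    have := (hx₀ a).ne'; have := (hx₁ a).ne'; have := (hx₂ a).ne'
    simp only [Pi.sub_apply]
    field_simp
    ring
  rw [sum_sub_distrib, ← mul_sum, sub_eq_zero] at hsum
  exact hsum.symm

theorem sum_sq_div_le_sq_mul_of_eq {x y δ : ι → ℝ} {η : ℝ}
    (hx : ∀ a, 0 < x a) (hy : ∀ a, 0 < y a)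
    (h : ∑ a, (y a - x a) ^ 2 / (x a * y a) = η * ∑ a, (y a - x a) * δ a) :
    ∑ a, (y a - x a) ^ 2 / (x a * y a) ≤ η ^ 2 * ∑ a, x a * y a * δ a ^ 2 := by
  set S := ∑ a, (y a - x a) ^ 2 / (x a * y a)
  set Q := ∑ a, x a * y a * δ a ^ 2
  have hS : 0 ≤ S := sum_nonneg fun a _ => by have := hx a; have := hy a; positivity
  have hQ : 0 ≤ Q := sum_nonneg fun a _ => by have := hx a; have := hy a; positivity
  have hCS : (∑ a, (y a - x a) * δ a) ^ 2 ≤ S * Q :=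
    sum_sq_le_sum_mul_sum_of_sq_le_mul univ
      (fun a _ => by have := hx a; have := hy a; positivity)
      (fun a _ => by have := hx a; have := hy a; positivity)
      (fun a _ => le_of_eq (by have := (hx a).ne'; have := (hy a).ne'; field_simp))
  have hSS : S * S ≤ S * (η ^ 2 * Q) :=
    calc S * S = η ^ 2 * (∑ a, (y a - x a) * δ a) ^ 2 := by rw [h]; ring
      _ ≤ η ^ 2 * (S * Q) := by gcongr
      _ = S * (η ^ 2 * Q) := by ring
  rcases hS.eq_or_lt with hS0 | hS0
  · rw [← hS0]; positivity
  · exact le_of_mul_le_mul_left hSS hS0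

theorem abs_sub_le_of_sum_sq_div_le {x y δ : ι → ℝ} {η B ρ : ℝ}
    (hx : ∀ a, 0 < x a) (hy : ∀ a, 0 < y a) (hη : 0 ≤ η) (hB : 0 ≤ B)
    (hρ : ∀ a, y a ≤ ρ * x a)
    (hS : ∑ a, (y a - x a) ^ 2 / (x a * y a) ≤ η ^ 2 * ∑ a, x a * y a * δ a ^ 2)
    (hW : ∑ a, x a ^ 2 * δ a ^ 2 ≤ B ^ 2) (i : ι) :
    |y i - x i| ≤ η * B * ρ * x i := by
  have hρ0 : 0 ≤ ρ := by nlinarith [hx i, hy i, hρ i]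
  have hQ : ∑ a, x a * y a * δ a ^ 2 ≤ ρ * B ^ 2 :=
    calc ∑ a, x a * y a * δ a ^ 2 ≤ ∑ a, ρ * (x a ^ 2 * δ a ^ 2) :=
          sum_le_sum fun a _ => by
            have := mul_le_mul_of_nonneg_left (hρ a) (mul_nonneg (hx a).le (sq_nonneg (δ a)))
            linarith
      _ ≤ ρ * B ^ 2 := by rw [← mul_sum]; gcongr
  have hterm : (y i - x i) ^ 2 / (x i * y i) ≤ ∑ a, (y a - x a) ^ 2 / (x a * y a) :=
    single_le_sum (f := fun a => (y a - x a) ^ 2 / (x a * y a))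
      (fun a _ => by have := hx a; have := hy a; positivity) (mem_univ i)
  have hxy : 0 < x i * y i := mul_pos (hx i) (hy i)
  refine abs_le_of_sq_le_sq ?_ (by have := hx i; positivity)
  calc (y i - x i) ^ 2 ≤ η ^ 2 * (ρ * B ^ 2) * (x i * y i) := by
        rw [← div_le_iff₀ hxy]; exact hterm.trans (hS.trans (by gcongr))
    _ ≤ η ^ 2 * (ρ * B ^ 2) * (x i * (ρ * x i)) := by
        gcongr
        · exact (hx i).le
        · exact hρ i
    _ = (η * B * ρ * x i) ^ 2 := by ring

theorem abs_sub_le_of_forall_abs_sub_le_mul_ratio {x y : ι → ℝ} {c : ℝ}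
    (hx : ∀ a, 0 < x a) (hc₀ : 0 ≤ c) (hc₁ : c < 1)
    (h : ∀ ρ, (∀ a, y a ≤ ρ * x a) → ∀ i, |y i - x i| ≤ c * ρ * x i) (i : ι) :
    |y i - x i| ≤ c / (1 - c) * x i := by
  have : Nonempty ι := ⟨i⟩
  obtain ⟨j, hj⟩ := Finite.exists_max fun a => y a / x a
  have hρ : ∀ a, y a ≤ y j / x j * x a := fun a => by
    have := hj a; rwa [div_le_iff₀ (hx a)] at this
  have hjj := (le_abs_self _).trans (h _ hρ j)
  rw [mul_assoc, div_mul_cancel₀ _ (hx j).ne'] at hjj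
  have hρ_le : y j / x j ≤ 1 / (1 - c) := by
    rw [div_le_div_iff₀ (hx j) (by linarith)]
    linarith
  calc |y i - x i| ≤ c * (y j / x j) * x i := h _ hρ i
    _ ≤ c * (1 / (1 - c)) * x i := by gcongr; exact (hx i).le
    _ = c / (1 - c) * x i := by ring

end

theorem log_barrier_minimizers_stability_general
    (A : ℕ) (η C : ℝ) (hη : 0 < η) (hC : 0 < C)
    (hηC : η ≤ 1 / (270 * C))
    (D : (Fin A → ℝ) → (Fin A → ℝ) → ℝ)
    (hD : ∀ x x', D x x' =
      (1 / η) * ∑ a, (Real.log (x' a / x a) + x a / x' a - 1))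
    (a₀ a₁ a₂ : Fin A → ℝ) (b₁ b₂ : Fin A → ℝ)
    (ha₀ : (∀ a, 0 < a₀ a) ∧ ∑ a, a₀ a = 1)
    (ha₁ : (∀ a, 0 < a₁ a) ∧ ∑ a, a₁ a = 1)
    (ha₂ : (∀ a, 0 < a₂ a) ∧ ∑ a, a₂ a = 1)
    (hmin₁ : ∀ x : Fin A → ℝ, (∀ a, 0 < x a) → ∑ a, x a = 1 →
      (∑ a, a₁ a * b₁ a) + D a₁ a₀ ≤ (∑ a, x a * b₁ a) + D x a₀)
    (hmin₂ : ∀ x : Fin A → ℝ, (∀ a, 0 < x a) → ∑ a, x a = 1 →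
      (∑ a, a₂ a * b₂ a) + D a₂ a₀ ≤ (∑ a, x a * b₂ a) + D x a₀)
    (hclose : Real.sqrt (∑ a, η * (a₁ a) ^ 2 * (b₁ a - b₂ a) ^ 2) ≤
      12 * Real.sqrt η * C) :
    ∀ i, |a₂ i - a₁ i| ≤ 60 * η * C * a₁ i := by
  obtain rfl : D = logBarrierBregman η := funext₂ hD
  have hW : ∑ a, a₁ a ^ 2 * (b₁ a - b₂ a) ^ 2 ≤ (12 * C) ^ 2 := by
    rw [show 12 * √η * C = √(η * (12 * C) ^ 2) by
      rw [Real.sqrt_mul hη.le, Real.sqrt_sq (by positivity)]; ring,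
      Real.sqrt_le_sqrt_iff (by positivity)] at hclose
    simp_rw [mul_assoc, ← mul_sum] at hclose
    exact le_of_mul_le_mul_left hclose hη
  have hc : 12 * η * C ≤ 12 / 270 := by
    rw [le_div_iff₀ (by positivity)] at hηC
    linarith
  have hS := sum_sq_div_le_sq_mul_of_eq ha₁.1 ha₂.1 <|
    sum_sq_div_mul_eq_of_minimizes_mirrorStep hη.ne' ha₀.1 ha₁.1 ha₂.1 ha₁.2 ha₂.2 hmin₁ hmin₂
  intro i
  calc |a₂ i - a₁ i| ≤ 12 * η * C / (1 - 12 * η * C) * a₁ i :=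
        abs_sub_le_of_forall_abs_sub_le_mul_ratio ha₁.1 (by positivity) (by linarith)
          (fun ρ hρ j => (abs_sub_le_of_sum_sq_div_le ha₁.1 ha₂.1 hη.le (by positivity)
            hρ hS hW j).trans_eq (by ring)) i
    _ ≤ 60 * η * C * a₁ i := by
        gcongr
        · exact (ha₁.1 i).le
        · rw [div_le_iff₀ (by linarith)]
          nlinarith [mul_pos hη hC]

/-- Stability of log-barrier mirror-descent steps (Lemma 10 of Bubeck et al., 2019 /
Lemma A.4 here): if two minimizers over the positive simplex of linear-plus-Bregman
objectives have close linear parts (in the local dual norm at `a₁`), then they are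
multiplicatively close. -/
theorem log_barrier_minimizers_stability
    (A : ℕ) (hA : 1 ≤ A) (η C : ℝ) (hη : 0 < η) (hC : 0 < C)
    (hηC : η ≤ 1 / (270 * C))
    (D : (Fin A → ℝ) → (Fin A → ℝ) → ℝ)
    (hD : ∀ x x', D x x' =
      (1 / η) * ∑ a, (Real.log (x' a / x a) + x a / x' a - 1))
    (a₀ a₁ a₂ : Fin A → ℝ) (b₁ b₂ : Fin A → ℝ)
    (ha₀ : (∀ a, 0 < a₀ a) ∧ ∑ a, a₀ a = 1)
    (ha₁ : (∀ a, 0 < a₁ a) ∧ ∑ a, a₁ a = 1)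
    (ha₂ : (∀ a, 0 < a₂ a) ∧ ∑ a, a₂ a = 1)
    (hmin₁ : ∀ x : Fin A → ℝ, (∀ a, 0 < x a) → ∑ a, x a = 1 →
      (∑ a, a₁ a * b₁ a) + D a₁ a₀ ≤ (∑ a, x a * b₁ a) + D x a₀)
    (hmin₂ : ∀ x : Fin A → ℝ, (∀ a, 0 < x a) → ∑ a, x a = 1 →
      (∑ a, a₂ a * b₂ a) + D a₂ a₀ ≤ (∑ a, x a * b₂ a) + D x a₀)
    (hclose : Real.sqrt (∑ a, η * (a₁ a) ^ 2 * (b₁ a - b₂ a) ^ 2) ≤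
      12 * Real.sqrt η * C) :
    ∀ i, |a₂ i - a₁ i| ≤ 60 * η * C * a₁ i :=
  log_barrier_minimizers_stability_general A η C hη hC hηC D hD a₀ a₁ a₂ b₁ b₂ ha₀ ha₁ ha₂ hmin₁
    hmin₂ hclose
end

section
/- Let A ≥ 1 and K ≥ 1 be integers, η > 0, C > 0 with η ≤ 1/(270·C). Let ψ(x) := (1/η) Σ_a log(1/x(a)) and D_ψ(x,x') := (1/η) Σ_a [ log(x'(a)/x(a)) + x(a)/x'(a) − 1 ] on vectors with positive coordinates, and let Δ_A⁺ be the set of probability vectors in ℝ^A with all coordinates positive. Let π_1 = π_1' be the uniform vector (1/A,…,1/A), let β̂_0 = 0, and let β̂_1,…,β̂_K ∈ ℝ^A be nonnegative vectors with Σ_a π_k(a) β̂_k(a) ≤ C for each k. Suppose for each k = 1,…,K: π_{k+1}' ∈ Δ_A⁺ minimizes ⟨π, −β̂_k⟩ + D_ψ(π, π_k') over Δ_A⁺, and π_{k+1} ∈ Δ_A⁺ minimizes ⟨π, −β̂_k⟩ + D_ψ(π, π_{k+1}') over Δ_A⁺. Then for every k ∈ {1,…,K} and every coordinate a, |π_{k+1}(a)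 − π_k(a)| ≤ 120 η C · π_k(a). -/
open Finset Filter Topology

/-!
At a minimiser `x` of `⟨y, -β⟩ + D_ψ(y, c)` over the open simplex the first-order condition reads
`1 / x a = 1 / c a - η (β a + μ)` for a Lagrange multiplier `μ`. As `x` and `c` both sum to one,
`-μ` is the `x c`-weighted mean of `β ≥ 0`; together with `⟨c, β⟩ ≤ B` this puts every coordinate of
`x` within a factor `1 + 2ηB` of `c`. Along the optimistic iteration `π'_k` stays within a factor
`1 + 4ηC` of `π_k`, so both half-steps see losses `⟨·, β_k⟩ ≤ 2C`, and `π_{k+1}` is within a factor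
`(1 + 4ηC)³ ≤ 1 + 120ηC` of `π_k`.
-/

namespace LogBarrierOMD

def posSimplex (ι : Type*) [Fintype ι] : Set (ι → ℝ) :=
  {x | (∀ a, 0 < x a) ∧ ∑ a, x a = 1}

noncomputable def logBarrierDiv {ι : Type*} [Fintype ι] (η : ℝ) (x x' : ι → ℝ) : ℝ :=
  (1 / η) * ∑ a, (Real.log (x' a / x a) + x a / x' a - 1)

noncomputable def omdObjective {ι : Type*} [Fintype ι] (η : ℝ) (β c y : ι → ℝ) : ℝ :=
  ∑ a, y a * -β a + logBarrierDiv η y c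

def WithinFactor {ι : Type*} (r : ℝ) (x y : ι → ℝ) : Prop :=
  ∀ a, x a ≤ r * y a ∧ y a ≤ r * x a

theorem eq_mul_of_inv_eq {η μ x c b : ℝ} (hc : c ≠ 0) (hx : x ≠ 0)
    (h : 1 / x = 1 / c - η * (b + μ)) : c = x * (1 - η * c * (b + μ)) := by
  field_simp at h
  linear_combination h

theorem le_two_mul_of_le_mul_one_add {u e : ℝ} (he0 : 0 ≤ e) (he : e ≤ 1 / 5)
    (h : u ≤ (1 + 2 * e) * e * (1 + u)) : u ≤ 2 * e := by
  have he2 : e * e ≤ e * (1 / 5) := mul_le_mul_of_nonneg_left he he0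
  by_contra! hlt
  nlinarith [mul_lt_mul_of_pos_right hlt (by nlinarith : (0:ℝ) < 1 - e - 2 * e ^ 2),
    mul_le_mul_of_nonneg_left he2 he0]

variable {ι : Type*}

namespace WithinFactor

variable {r s : ℝ} {x y z : ι → ℝ}

theorem self (hr : 1 ≤ r) (hx : ∀ a, 0 ≤ x a) : WithinFactor r x x :=
  fun a => ⟨le_mul_of_one_le_left (hx a) hr, le_mul_of_one_le_left (hx a) hr⟩

theorem symm (h : WithinFactor r x y) : WithinFactor r y x :=
  fun a => (h a).symm

theorem trans (hr : 0 ≤ r) (hs : 0 ≤ s) (hxy : WithinFactor r x y) (hyz : WithinFactor s y z) :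
    WithinFactor (r * s) x z := fun a =>
  ⟨(hxy a).1.trans (by rw [mul_assoc]; exact mul_le_mul_of_nonneg_left (hyz a).1 hr),
    (hyz a).2.trans (by rw [mul_comm r, mul_assoc]; exact mul_le_mul_of_nonneg_left (hxy a).2 hs)⟩

theorem abs_sub_le (h : WithinFactor r x y) (hr : 1 ≤ r) (a : ι) :
    |x a - y a| ≤ (r - 1) * y a := by
  obtain ⟨hxy, hyx⟩ := h a
  refine abs_le.mpr ⟨?_, by linarith⟩
  nlinarith

end WithinFactor

variable [Fintype ι]

theorem WithinFactor.sum_mul_le {r : ℝ} {x y β : ι → ℝ} (h : WithinFactor r x y)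
    (hβ : ∀ a, 0 ≤ β a) :
    ∑ a, x a * β a ≤ r * ∑ a, y a * β a := by
  rw [mul_sum]
  exact sum_le_sum fun a _ => by
    rw [← mul_assoc]; exact mul_le_mul_of_nonneg_right (h a).1 (hβ a)

theorem exists_forall_eq_of_isMinOn_posSimplex {φ : ι → ℝ → ℝ} {φ' : ι → ℝ} {x : ι → ℝ}
    (hx : x ∈ posSimplex ι) (hφ : ∀ a, HasDerivAt (φ a) (φ' a) (x a))
    (hmin : IsMinOn (fun y => ∑ a, φ a (y a)) (posSimplex ι) x) :
    ∃ μ, ∀ a, φ' a = μ := by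
  classical
  rcases isEmpty_or_nonempty ι with hι | ⟨⟨i⟩⟩
  · exact ⟨0, fun a => hι.elim a⟩
  refine ⟨φ' i, fun j => ?_⟩
  set d : ι → ℝ := Pi.single j 1 - Pi.single i 1
  have hline : ∀ a, HasDerivAt (fun t : ℝ => x a + t * d a) (d a) 0 := fun a => by
    simpa using ((hasDerivAt_id (0 : ℝ)).mul_const (d a)).const_add (x a)
  have hderiv : HasDerivAt (fun t => ∑ a, φ a (x a + t * d a)) (∑ a, φ' a * d a) 0 :=
    HasDerivAt.fun_sum fun a _ => (hφ a).comp_of_eq 0 (hline a) (by simp)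
  have hpos : ∀ᶠ t in 𝓝 (0 : ℝ), ∀ a, 0 < x a + t * d a :=
    eventually_all.mpr fun a =>
      (hline a).continuousAt.eventually (lt_mem_nhds (by simpa using hx.1 a))
  have hloc : IsLocalMin (fun t => ∑ a, φ a (x a + t * d a)) 0 := by
    filter_upwards [hpos] with t ht
    have hsum : ∑ a, (x a + t * d a) = 1 := by
      simp [d, sum_add_distrib, mul_sub, sum_sub_distrib, hx.2, Pi.single_apply]
    simpa using isMinOn_iff.mp hmin _ ⟨ht, hsum⟩
  have hdir : ∑ a, φ' a * d a = φ' j - φ' i := by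
    simp [d, mul_sub, sum_sub_distrib, Pi.single_apply]
  linarith [hloc.hasDerivAt_eq_zero hderiv]

theorem exists_multiplier_of_isMinOn {η : ℝ} {β c x : ι → ℝ} (hη : η ≠ 0)
    (hc : ∀ a, 0 < c a) (hx : x ∈ posSimplex ι)
    (hmin : IsMinOn (omdObjective η β c) (posSimplex ι) x) :
    ∃ μ, ∀ a, 1 / x a = 1 / c a - η * (β a + μ) := by
  set φ : ι → ℝ → ℝ := fun a t => t * -β a + 1 / η * (Real.log (c a / t) + t / c a - 1)
  have hφ : ∀ a, HasDerivAt (φ a) (-β a + 1 / η * (-(1 / x a) + 1 / c a)) (x a) := fun a => by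
    have hxa := (hx.1 a).ne'
    have hca := (hc a).ne'
    have hlog : HasDerivAt (fun t => Real.log (c a / t)) (-(1 / x a)) (x a) := by
      convert ((hasDerivAt_inv hxa).const_mul (c a)).log (by simp [hxa, hca]) using 1
      · simp only [div_eq_mul_inv]
      · field_simp
    exact (hasDerivAt_mul_const (-β a)).add
      (((hlog.add ((hasDerivAt_id (x a)).div_const (c a))).sub_const 1).const_mul (1 / η))
  have hobj : omdObjective η β c = fun y => ∑ a, φ a (y a) := by
    ext y; simp only [φ, omdObjective, logBarrierDiv, sum_add_distrib, mul_sum]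
  obtain ⟨μ, hμ⟩ := exists_forall_eq_of_isMinOn_posSimplex hx hφ (hobj ▸ hmin)
  refine ⟨μ, fun a => ?_⟩
  rw [← hμ a]
  field_simp
  ring

section Multiplier

variable {η B μ : ℝ} {β c x : ι → ℝ}

theorem sum_mul_mul_eq_zero_of_inv_eq (hη : η ≠ 0) (hc : c ∈ posSimplex ι)
    (hx : x ∈ posSimplex ι) (h : ∀ a, 1 / x a = 1 / c a - η * (β a + μ)) :
    ∑ a, (β a + μ) * (x a * c a) = 0 := by
  have hdiff : ∑ a, (c a - x a) = -η * ∑ a, (β a + μ) * (x a * c a) := by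
    rw [mul_sum]
    refine sum_congr rfl fun a _ => ?_
    linear_combination eq_mul_of_inv_eq (hc.1 a).ne' (hx.1 a).ne' (h a)
  rw [sum_sub_distrib, hc.2, hx.2, sub_self] at hdiff
  exact (mul_eq_zero.mp hdiff.symm).resolve_left (neg_ne_zero.mpr hη)

theorem multiplier_nonpos (hη : η ≠ 0) (hβ : ∀ a, 0 ≤ β a) (hc : c ∈ posSimplex ι)
    (hx : x ∈ posSimplex ι) (h : ∀ a, 1 / x a = 1 / c a - η * (β a + μ)) : μ ≤ 0 := by
  have hzero := sum_mul_mul_eq_zero_of_inv_eq hη hc hx h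
  simp only [add_mul, sum_add_distrib, ← mul_sum] at hzero
  have hS : 0 < ∑ a, x a * c a :=
    sum_pos (fun a _ => mul_pos (hx.1 a) (hc.1 a))
      (nonempty_of_sum_ne_zero (f := x) (by simp [hx.2]))
  have hT : 0 ≤ ∑ a, β a * (x a * c a) :=
    sum_nonneg fun a _ => mul_nonneg (hβ a) (mul_pos (hx.1 a) (hc.1 a)).le
  nlinarith

theorem new_le_mul_old (hη : 0 < η) (hηB : η * B ≤ 1 / 2) (hβ : ∀ a, 0 ≤ β a)
    (hc : c ∈ posSimplex ι) (hx : x ∈ posSimplex ι) (hcβ : ∑ a, c a * β a ≤ B)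
    (h : ∀ a, 1 / x a = 1 / c a - η * (β a + μ)) (a : ι) :
    x a ≤ (1 + 2 * (η * B)) * c a := by
  have hμ := multiplier_nonpos hη.ne' hβ hc hx h
  have hmul := eq_mul_of_inv_eq (hc.1 a).ne' (hx.1 a).ne' (h a)
  have hcβa : c a * β a ≤ B :=
    (single_le_sum (fun b _ => mul_nonneg (hc.1 b).le (hβ b)) (mem_univ a)).trans hcβ
  have hxa := hx.1 a
  have hlow : x a * (1 - η * B) ≤ c a := by
    calc x a * (1 - η * B) ≤ x a * (1 - η * c a * (β a + μ)) := by
          refine mul_le_mul_of_nonneg_left ?_ hxa.le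
          nlinarith [mul_le_mul_of_nonneg_left hcβa hη.le,
            mul_nonneg (mul_nonneg hη.le (hc.1 a).le) (neg_nonneg.mpr hμ)]
      _ = c a := hmul.symm
  have hηB0 : 0 ≤ η * B := mul_nonneg hη.le ((mul_nonneg (hc.1 a).le (hβ a)).trans hcβa)
  nlinarith [mul_nonneg (mul_nonneg hηB0 (by linarith : (0:ℝ) ≤ 1 - 2 * (η * B))) hxa.le]

theorem neg_multiplier_mul_max_le (hη : 0 < η) (hηB : η * B ≤ 1 / 5) (hβ : ∀ a, 0 ≤ β a)
    (hc : c ∈ posSimplex ι) (hx : x ∈ posSimplex ι) (hcβ : ∑ a, c a * β a ≤ B)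
    (h : ∀ a, 1 / x a = 1 / c a - η * (β a + μ)) {m : ι} (hm : ∀ a, c a ≤ c m) :
    η * -μ * c m ≤ 2 * (η * B) := by
  have hμ := multiplier_nonpos hη.ne' hβ hc hx h
  have hcm := hc.1 m
  have hηB0 : 0 ≤ η * B :=
    mul_nonneg hη.le ((sum_nonneg fun b _ => mul_nonneg (hc.1 b).le (hβ b)).trans hcβ)
  set u := η * -μ * c m
  have hu0 : 0 ≤ u := mul_nonneg (mul_nonneg hη.le (neg_nonneg.mpr hμ)) hcm.le
  have hmean : -μ * ∑ a, x a * c a = ∑ a, β a * (x a * c a) := by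
    have := sum_mul_mul_eq_zero_of_inv_eq hη.ne' hc hx h
    simp only [add_mul, sum_add_distrib, ← mul_sum] at this
    linarith
  have hT : ∑ a, β a * (x a * c a) ≤ (1 + 2 * (η * B)) * c m * B := by
    calc ∑ a, β a * (x a * c a) ≤ ∑ a, (1 + 2 * (η * B)) * c m * (c a * β a) := by
          refine sum_le_sum fun a _ => ?_
          have hxa := new_le_mul_old hη (by linarith) hβ hc hx hcβ h a
          have := mul_le_mul hxa (hm a) (hc.1 a).le (mul_nonneg (by linarith) (hc.1 a).le)
          nlinarith [mul_le_mul_of_nonneg_left this (hβ a)]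
      _ ≤ (1 + 2 * (η * B)) * c m * B := by
          rw [← mul_sum]
          exact mul_le_mul_of_nonneg_left hcβ (mul_nonneg (by linarith) hcm.le)
  have hS : c m * c m ≤ (∑ a, x a * c a) * (1 + u) := by
    have hxm : c m ≤ x m * (1 + u) := by
      rw [eq_mul_of_inv_eq hcm.ne' (hx.1 m).ne' (h m)]
      nlinarith [mul_nonneg (mul_nonneg hη.le hcm.le) (hβ m), (hx.1 m).le]
    have hsingle : x m * c m ≤ ∑ a, x a * c a :=
      single_le_sum (fun a _ => (mul_pos (hx.1 a) (hc.1 a)).le) (mem_univ m)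
    nlinarith
  have hsq : -μ * (c m * c m) ≤ (1 + 2 * (η * B)) * c m * B * (1 + u) :=
    calc -μ * (c m * c m) ≤ -μ * ((∑ a, x a * c a) * (1 + u)) :=
          mul_le_mul_of_nonneg_left hS (neg_nonneg.mpr hμ)
      _ = (∑ a, β a * (x a * c a)) * (1 + u) := by rw [← hmean]; ring
      _ ≤ (1 + 2 * (η * B)) * c m * B * (1 + u) := mul_le_mul_of_nonneg_right hT (by linarith)
  refine le_two_mul_of_le_mul_one_add hηB0 hηB (le_of_mul_le_mul_right ?_ hcm)
  linear_combination η * hsq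

theorem neg_multiplier_mul_le (hη : 0 < η) (hηB : η * B ≤ 1 / 5) (hβ : ∀ a, 0 ≤ β a)
    (hc : c ∈ posSimplex ι) (hx : x ∈ posSimplex ι) (hcβ : ∑ a, c a * β a ≤ B)
    (h : ∀ a, 1 / x a = 1 / c a - η * (β a + μ)) (a : ι) :
    η * -μ * c a ≤ 2 * (η * B) := by
  have : Nonempty ι := ⟨a⟩
  obtain ⟨m, hm⟩ := Finite.exists_max c
  have hμ := multiplier_nonpos hη.ne' hβ hc hx h
  calc η * -μ * c a ≤ η * -μ * c m :=
        mul_le_mul_of_nonneg_left (hm a) (mul_nonneg hη.le (neg_nonneg.mpr hμ))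
    _ ≤ 2 * (η * B) := neg_multiplier_mul_max_le hη hηB hβ hc hx hcβ h hm

theorem old_le_mul_new (hη : 0 < η) (hηB : η * B ≤ 1 / 5) (hβ : ∀ a, 0 ≤ β a)
    (hc : c ∈ posSimplex ι) (hx : x ∈ posSimplex ι) (hcβ : ∑ a, c a * β a ≤ B)
    (h : ∀ a, 1 / x a = 1 / c a - η * (β a + μ)) (a : ι) :
    c a ≤ (1 + 2 * (η * B)) * x a := by
  have hmul := eq_mul_of_inv_eq (hc.1 a).ne' (hx.1 a).ne' (h a)
  have hμ := neg_multiplier_mul_le hη hηB hβ hc hx hcβ h a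
  have hβa := mul_nonneg (mul_nonneg hη.le (hc.1 a).le) (hβ a)
  calc c a = x a * (1 - η * c a * (β a + μ)) := hmul
    _ ≤ x a * (1 + 2 * (η * B)) := mul_le_mul_of_nonneg_left (by nlinarith) (hx.1 a).le
    _ = (1 + 2 * (η * B)) * x a := mul_comm _ _

end Multiplier

theorem withinFactor_of_isMinOn {η B : ℝ} {β c x : ι → ℝ} (hη : 0 < η) (hηB : η * B ≤ 1 / 5)
    (hβ : ∀ a, 0 ≤ β a) (hc : c ∈ posSimplex ι) (hx : x ∈ posSimplex ι)
    (hcβ : ∑ a, c a * β a ≤ B) (hmin : IsMinOn (omdObjective η β c) (posSimplex ι) x) :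
    WithinFactor (1 + 2 * (η * B)) x c := by
  obtain ⟨μ, h⟩ := exists_multiplier_of_isMinOn hη.ne' hc.1 hx hmin
  exact fun a => ⟨new_le_mul_old hη (by linarith) hβ hc hx hcβ h a,
    old_le_mul_new hη hηB hβ hc hx hcβ h a⟩

theorem withinFactor_optimistic_step {η C : ℝ} {β q q' p' : ι → ℝ} (hη : 0 < η) (hC : 0 ≤ C)
    (hηC : η * C ≤ 1 / 270) (hβ : ∀ a, 0 ≤ β a) (hq : q ∈ posSimplex ι)
    (hq' : q' ∈ posSimplex ι) (hp' : p' ∈ posSimplex ι)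
    (hqβ : ∑ a, q a * β a ≤ (1 + 4 * (η * C)) * C)
    (hmin : IsMinOn (omdObjective η β q) (posSimplex ι) q')
    (hmin' : IsMinOn (omdObjective η β q') (posSimplex ι) p') :
    WithinFactor (1 + 4 * (η * C)) q' q ∧ WithinFactor (1 + 4 * (η * C)) p' q' := by
  have hfactor : 1 + 2 * (η * (2 * C)) = 1 + 4 * (η * C) := by ring
  have hηB : η * (2 * C) ≤ 1 / 5 := by linarith
  have hq'q := hfactor ▸ withinFactor_of_isMinOn hη hηB hβ hq hq' (by nlinarith) hmin
  refine ⟨hq'q, hfactor ▸ withinFactor_of_isMinOn hη hηB hβ hq' hp' ?_ hmin'⟩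
  calc ∑ a, q' a * β a ≤ (1 + 4 * (η * C)) * ((1 + 4 * (η * C)) * C) :=
        (hq'q.sum_mul_le hβ).trans (mul_le_mul_of_nonneg_left hqβ (by positivity))
    _ ≤ 2 * C := by nlinarith [mul_nonneg (mul_nonneg hη.le hC) hC]

theorem withinFactor_optimistic_iterates {η C : ℝ} {K : ℕ} {π πp β : ℕ → ι → ℝ}
    (hη : 0 < η) (hC : 0 ≤ C) (hηC : η * C ≤ 1 / 270) (h1 : π 1 = πp 1)
    (hπp1 : πp 1 ∈ posSimplex ι) (hβ : ∀ k ∈ Icc 1 K, ∀ a, 0 ≤ β k a)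
    (hβC : ∀ k ∈ Icc 1 K, ∑ a, π k a * β k a ≤ C)
    (hπp : ∀ k ∈ Icc 1 K, πp (k + 1) ∈ posSimplex ι) (hπ : ∀ k ∈ Icc 1 K, π (k + 1) ∈ posSimplex ι)
    (hmin : ∀ k ∈ Icc 1 K, IsMinOn (omdObjective η (β k) (πp k)) (posSimplex ι) (πp (k + 1)))
    (hmin' : ∀ k ∈ Icc 1 K,
      IsMinOn (omdObjective η (β k) (πp (k + 1))) (posSimplex ι) (π (k + 1))) :
    ∀ k ∈ Icc 1 K, WithinFactor ((1 + 4 * (η * C)) ^ 3) (π (k + 1)) (π k) := by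
  set r := 1 + 4 * (η * C)
  have hr : 0 ≤ r := by positivity
  have hmem : ∀ k ∈ Icc 1 K, πp k ∈ posSimplex ι := by
    rintro (_ | _ | k) hk
    · simp at hk
    · exact hπp1
    · exact hπp (k + 1) (by simp only [mem_Icc] at hk ⊢; omega)
  have hround : ∀ k ∈ Icc 1 K, WithinFactor r (πp k) (π k) →
      WithinFactor r (πp (k + 1)) (πp k) ∧ WithinFactor r (π (k + 1)) (πp (k + 1)) :=
    fun k hk hinv => withinFactor_optimistic_step hη hC hηC (hβ k hk) (hmem k hk) (hπp k hk)
      (hπ k hk) ((hinv.sum_mul_le (hβ k hk)).trans (mul_le_mul_of_nonneg_left (hβC k hk) hr))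
      (hmin k hk) (hmin' k hk)
  have hinv : ∀ k, 1 ≤ k → k ≤ K → WithinFactor r (πp k) (π k) := by
    intro k hk1
    induction k, hk1 using Nat.le_induction with
    | base =>
      intro hK
      rw [h1]
      exact WithinFactor.self (by linarith [mul_nonneg hη.le hC]) fun a => (hπp1.1 a).le
    | succ k hk1 ih =>
      intro hkK
      exact (hround k (mem_Icc.mpr ⟨hk1, by omega⟩) (ih (by omega))).2.symm
  intro k hk
  have hinvk := hinv k (mem_Icc.mp hk).1 (mem_Icc.mp hk).2
  obtain ⟨hq, hp⟩ := hround k hk hinvk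
  exact pow_three' r ▸ (hp.trans hr hr hq).trans (by positivity) hr hinvk

end LogBarrierOMD

open LogBarrierOMD

theorem oomd_log_barrier_stability_general
    (A K : ℕ) (hA : 1 ≤ A)
    (η C : ℝ) (hη : 0 < η) (hC : 0 < C) (hηC : η ≤ 1 / (270 * C))
    (D : (Fin A → ℝ) → (Fin A → ℝ) → ℝ)
    (hD : ∀ x x', D x x' =
      (1 / η) * ∑ a, (Real.log (x' a / x a) + x a / x' a - 1))
    (π πp : ℕ → Fin A → ℝ) (β : ℕ → Fin A → ℝ)
    (hπ1 : ∀ a, π 1 a = 1 / (A : ℝ)) (hπp1 : ∀ a, πp 1 a = 1 / (A : ℝ))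
    (hβnonneg : ∀ k ∈ Icc 1 K, ∀ a, 0 ≤ β k a)
    (hβbound : ∀ k ∈ Icc 1 K, ∑ a, π k a * β k a ≤ C)
    (hπpΔ : ∀ k ∈ Icc 1 K, (∀ a, 0 < πp (k + 1) a) ∧ ∑ a, πp (k + 1) a = 1)
    (hπΔ : ∀ k ∈ Icc 1 K, (∀ a, 0 < π (k + 1) a) ∧ ∑ a, π (k + 1) a = 1)
    (hπpmin : ∀ k ∈ Icc 1 K, ∀ x : Fin A → ℝ, (∀ a, 0 < x a) → ∑ a, x a = 1 →
      (∑ a, πp (k + 1) a * (-(β k a))) + D (πp (k + 1)) (πp k) ≤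
        (∑ a, x a * (-(β k a))) + D x (πp k))
    (hπmin : ∀ k ∈ Icc 1 K, ∀ x : Fin A → ℝ, (∀ a, 0 < x a) → ∑ a, x a = 1 →
      (∑ a, π (k + 1) a * (-(β k a))) + D (π (k + 1)) (πp (k + 1)) ≤
        (∑ a, x a * (-(β k a))) + D x (πp (k + 1))) :
    ∀ k ∈ Icc 1 K, ∀ a, |π (k + 1) a - π k a| ≤ 120 * η * C * π k a := by
  obtain rfl : D = logBarrierDiv η := funext₂ hD
  have hε : η * C ≤ 1 / 270 := by
    rwa [le_div_iff₀ (by positivity), mul_comm 270, ← mul_assoc, ← le_div_iff₀ (by norm_num)] at hηC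
  have hε0 := (mul_pos hη hC).le
  have huniform : πp 1 ∈ posSimplex (Fin A) := by
    refine ⟨fun a => by rw [hπp1]; positivity, ?_⟩
    simp only [hπp1, sum_const, card_univ, Fintype.card_fin, nsmul_eq_mul]
    field_simp
  have hsteps := withinFactor_optimistic_iterates hη hC.le hε
    (funext fun a => (hπ1 a).trans (hπp1 a).symm) huniform hβnonneg hβbound hπpΔ hπΔ
    (fun k hk => isMinOn_iff.mpr fun y hy => hπpmin k hk y hy.1 hy.2)
    (fun k hk => isMinOn_iff.mpr fun y hy => hπmin k hk y hy.1 hy.2)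
  intro k hk a
  have hr : 1 ≤ (1 + 4 * (η * C)) ^ 3 := one_le_pow₀ (by linarith)
  have hπk : 0 ≤ π k a := nonneg_of_mul_nonneg_right
    (((hπΔ k hk).1 a).le.trans (hsteps k hk a).1) (by linarith)
  calc |π (k + 1) a - π k a| ≤ ((1 + 4 * (η * C)) ^ 3 - 1) * π k a :=
        (hsteps k hk).abs_sub_le hr a
    _ ≤ 120 * η * C * π k a := by
        refine mul_le_mul_of_nonneg_right ?_ hπk
        nlinarith [mul_nonneg hε0 hε0, mul_nonneg (mul_nonneg hε0 hε0) hε0]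

/-- Stability of optimistic online mirror descent with a log-barrier regularizer
(Lemma A.3 / Eq. (stability)): consecutive iterates are multiplicatively
`120 η C`-close. -/
theorem oomd_log_barrier_stability
    (A K : ℕ) (hA : 1 ≤ A) (hK : 1 ≤ K)
    (η C : ℝ) (hη : 0 < η) (hC : 0 < C) (hηC : η ≤ 1 / (270 * C))
    (D : (Fin A → ℝ) → (Fin A → ℝ) → ℝ)
    (hD : ∀ x x', D x x' =
      (1 / η) * ∑ a, (Real.log (x' a / x a) + x a / x' a - 1))
    (π πp : ℕ → Fin A → ℝ) (β : ℕ → Fin A → ℝ)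
    (hπ1 : ∀ a, π 1 a = 1 / (A : ℝ)) (hπp1 : ∀ a, πp 1 a = 1 / (A : ℝ))
    (hβ0 : ∀ a, β 0 a = 0)
    (hβnonneg : ∀ k ∈ Icc 1 K, ∀ a, 0 ≤ β k a)
    (hβbound : ∀ k ∈ Icc 1 K, ∑ a, π k a * β k a ≤ C)
    (hπpΔ : ∀ k ∈ Icc 1 K, (∀ a, 0 < πp (k + 1) a) ∧ ∑ a, πp (k + 1) a = 1)
    (hπΔ : ∀ k ∈ Icc 1 K, (∀ a, 0 < π (k + 1) a) ∧ ∑ a, π (k + 1) a = 1)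
    (hπpmin : ∀ k ∈ Icc 1 K, ∀ x : Fin A → ℝ, (∀ a, 0 < x a) → ∑ a, x a = 1 →
      (∑ a, πp (k + 1) a * (-(β k a))) + D (πp (k + 1)) (πp k) ≤
        (∑ a, x a * (-(β k a))) + D x (πp k))
    (hπmin : ∀ k ∈ Icc 1 K, ∀ x : Fin A → ℝ, (∀ a, 0 < x a) → ∑ a, x a = 1 →
      (∑ a, π (k + 1) a * (-(β k a))) + D (π (k + 1)) (πp (k + 1)) ≤
        (∑ a, x a * (-(β k a))) + D x (πp (k + 1))) :
    ∀ k ∈ Icc 1 K, ∀ a, |π (k + 1) a - π k a| ≤ 120 * η * C * π k a :=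
  oomd_log_barrier_stability_general A K hA η C hη hC hηC D hD π πp β hπ1 hπp1 hβnonneg hβbound hπpΔ
    hπΔ hπpmin hπmin
end

section
/- Let S be a finite nonempty set, let P and P' be row-stochastic S × S matrices, let r : S → ℝ with |r(s)| ≤ 1 for all s, and let δ ≥ 0 satisfy Σ_{s'} |P'(s,s') − P(s,s')| ≤ δ for every s ∈ S. Then for every natural number n and every s ∈ S, |((P'^n − P^n) r)(s)| ≤ n·δ; that is, ‖(P'^n − P^n) r‖_∞ ≤ n·δ. -/
open Finset Matrix

lemma pow_stoch_nonneg {S : Type*} [Fintype S] [DecidableEq S]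
    (P : Matrix S S ℝ) (hP0 : ∀ s s', 0 ≤ P s s') :
    ∀ n : ℕ, ∀ s s', 0 ≤ (P ^ n) s s' := by
  intro n
  induction n with
  | zero =>
    intro s s'
    simp [Matrix.one_apply]
    split <;> norm_num
  | succ n ih =>
    intro s s'
    rw [pow_succ, Matrix.mul_apply]
    exact Finset.sum_nonneg fun t _ => mul_nonneg (ih s t) (hP0 t s')

lemma pow_stoch_rowsum {S : Type*} [Fintype S] [DecidableEq S]
    (P : Matrix S S ℝ) (hP1 : ∀ s, ∑ s', P s s' = 1) :
    ∀ n : ℕ, ∀ s, ∑ s', (P ^ n) s s' = 1 := by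
  intro n
  induction n with
  | zero => intro s; simp [Matrix.one_apply]
  | succ n ih =>
    intro s
    simp only [pow_succ, Matrix.mul_apply]
    rw [Finset.sum_comm]
    calc ∑ t, ∑ s', (P ^ n) s t * P t s'
        = ∑ t, (P ^ n) s t * ∑ s', P t s' := by
          simp [Finset.mul_sum]
      _ = 1 := by simp [hP1, ih s]

/-- Perturbation bound for powers of row-stochastic matrices:
`‖(P'^n - P^n) r‖_∞ ≤ n δ` whenever rows of `P'` and `P` are `δ`-close in L1
and `‖r‖_∞ ≤ 1`. -/
theorem stochastic_matrix_power_perturbation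
    {S : Type*} [Fintype S] [Nonempty S] [DecidableEq S]
    (P P' : Matrix S S ℝ)
    (hP0 : ∀ s s', 0 ≤ P s s') (hP1 : ∀ s, ∑ s', P s s' = 1)
    (hP'0 : ∀ s s', 0 ≤ P' s s') (hP'1 : ∀ s, ∑ s', P' s s' = 1)
    (r : S → ℝ) (hr : ∀ s, |r s| ≤ 1)
    (δ : ℝ) (hδ0 : 0 ≤ δ)
    (hclose : ∀ s, ∑ s', |P' s s' - P s s'| ≤ δ) :
    ∀ n : ℕ, ∀ s,
      |∑ s', ((P' ^ n) s s' - (P ^ n) s s') * r s'| ≤ (n : ℝ) * δ := by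
  intro n
  induction n with
  | zero => intro s; simp
  | succ n ih =>
    intro s
    have hB : ∀ t, |∑ s', (P ^ n) t s' * r s'| ≤ 1 := by
      intro t
      calc |∑ s', (P ^ n) t s' * r s'| ≤ ∑ s', |(P ^ n) t s' * r s'| :=
            Finset.abs_sum_le_sum_abs _ _
        _ ≤ ∑ s', (P ^ n) t s' := by
            apply Finset.sum_le_sum
            intro i _
            rw [abs_mul, abs_of_nonneg (pow_stoch_nonneg P hP0 n t i)]
            exact mul_le_of_le_one_right (pow_stoch_nonneg P hP0 n t i) (hr i)
        _ = 1 := pow_stoch_rowsum P hP1 n t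
    have key : ∑ s', ((P' ^ (n+1)) s s' - (P ^ (n+1)) s s') * r s'
        = ∑ t, (P' s t * (∑ s', ((P' ^ n) t s' - (P ^ n) t s') * r s')
            + (P' s t - P s t) * (∑ s', (P ^ n) t s' * r s')) := by
      simp only [pow_succ', Matrix.mul_apply, ← Finset.sum_sub_distrib,
        Finset.sum_mul, ← Finset.sum_add_distrib]
      rw [Finset.sum_comm]
      apply Finset.sum_congr rfl
      intro t _
      rw [Finset.mul_sum, Finset.mul_sum, ← Finset.sum_add_distrib]
      apply Finset.sum_congr rfl
      intro s' _
      ring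
    rw [key]
    calc |∑ t, (P' s t * (∑ s', ((P' ^ n) t s' - (P ^ n) t s') * r s')
            + (P' s t - P s t) * (∑ s', (P ^ n) t s' * r s'))|
        ≤ ∑ t, |P' s t * (∑ s', ((P' ^ n) t s' - (P ^ n) t s') * r s')
            + (P' s t - P s t) * (∑ s', (P ^ n) t s' * r s')| :=
          Finset.abs_sum_le_sum_abs _ _
      _ ≤ ∑ t, (P' s t * ((n : ℝ) * δ) + |P' s t - P s t| * 1) := by
          apply Finset.sum_le_sum
          intro t _
          refine (abs_add_le _ _).trans (add_le_add ?_ ?_)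
          · rw [abs_mul, abs_of_nonneg (hP'0 s t)]
            exact mul_le_mul_of_nonneg_left (ih t) (hP'0 s t)
          · rw [abs_mul]
            exact mul_le_mul_of_nonneg_left (hB t) (abs_nonneg _)
      _ ≤ (↑(n + 1) : ℝ) * δ := by
          rw [Finset.sum_add_distrib, ← Finset.sum_mul, ← Finset.sum_mul, hP'1 s]
          push_cast
          have := hclose s
          nlinarith [mul_nonneg (Nat.cast_nonneg (α := ℝ) n) hδ0]
end

section
/- Let A ≥ 1 be an integer and η > 0. Let ψ(x) := (1/η) Σ_a log(1/x(a)) and D_ψ(x,x') := (1/η) Σ_a [ log(x'(a)/x(a)) + x(a)/x'(a) − 1 ] on vectors with positive coordinates, and let Δ_A⁺ be the set of probability vectors in ℝ^A with all coordinates positive. Let π' ∈ Δ_A⁺ and β₁, β₂ ∈ ℝ^A. Suppose π ∈ Δ_A⁺ minimizes F(x) := ⟨x, −β₁⟩ + D_ψ(x, π') over Δ_A⁺, π'' ∈ Δ_A⁺ minimizes G(x) := ⟨x, −β₂⟩ + D_ψ(x, π') over Δ_A⁺, and (1/2)·π(a) ≤ π''(a) ≤ 2·π(a) for every coordinate a.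 Then ⟨π − π'', β₁ − β₂⟩ ≤ 8 η Σ_a π(a)² (β₁(a) − β₂(a))². -/
/-!
Write `F(x) = ⟨x, -β₁⟩ + D_ψ(x, π')`. The three-point identity for `D_ψ` makes `F(x) - F(π)` the
sum of a linear function of `x - π` and `D_ψ(x, π)`; since `D_ψ(x, π)` is quadratically small near
`π`, minimality of `π` forces the linear part to be nonnegative on `Δ_A⁺`, hence
`F(π) + D_ψ(π'', π) ≤ F(π'')`.
Adding the minimality of `π''` for `G` at `π` gives `D_ψ(π'', π) ≤ s := ⟨π - π'', β₁ - β₂⟩`.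
On the sandwich `π'' ≤ 2π` the divergence dominates `(1/8η) Σ_a ((π''(a) - π(a))/π(a))²`, and
Cauchy–Schwarz bounds `s²` by this sum times `Σ_a π(a)² (β₁(a) - β₂(a))²`.
-/

open Finset Filter Topology

namespace Real

theorem sub_one_sub_log_le_two_mul_sq {t : ℝ} (ht : 1 / 2 ≤ t) :
    t - 1 - log t ≤ 2 * (t - 1) ^ 2 := by
  have ht0 : 0 < t := by linarith
  have hlog : log t⁻¹ ≤ t⁻¹ - 1 := log_le_sub_one_of_pos (inv_pos.2 ht0)
  rw [log_inv] at hlog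
  have : t * t⁻¹ = 1 := mul_inv_cancel₀ ht0.ne'
  nlinarith [sq_nonneg (t - 1)]

theorem sq_div_eight_le_sub_one_sub_log {t : ℝ} (ht0 : 0 < t) (ht2 : t ≤ 2) :
    (t - 1) ^ 2 / 8 ≤ t - 1 - log t := by
  set u := √t
  have hu0 : 0 ≤ u := sqrt_nonneg t
  have hut : u ^ 2 = t := sq_sqrt ht0.le
  have hlog : log t = 2 * log u := by rw [log_sqrt ht0.le]; ring
  have hlogu : log u ≤ u - 1 := log_le_sub_one_of_pos (sqrt_pos.2 ht0)
  have hu2 : u ≤ 3 / 2 := by nlinarith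
  nlinarith [sq_nonneg (u - 1)]

end Real

theorem nonneg_of_eventually_nonneg_mul_add_sq_mul {L M : ℝ}
    (h : ∀ᶠ l in 𝓝[>] 0, 0 ≤ l * L + l ^ 2 * M) : 0 ≤ L := by
  have hlim : Tendsto (fun l : ℝ => L + l * M) (𝓝[>] 0) (𝓝 L) :=
    ((continuous_const.add (continuous_id.mul continuous_const)).tendsto' 0 L
      (by simp)).mono_left nhdsWithin_le_nhds
  refine ge_of_tendsto hlim ?_
  filter_upwards [h, self_mem_nhdsWithin] with l hl (hl0 : 0 < l)
  nlinarith

theorem le_mul_of_sq_le_mul_of_le_mul {s U V k : ℝ} (hk : 0 ≤ k) (hV : 0 ≤ V)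
    (hsq : s ^ 2 ≤ U * V) (hU : U ≤ k * s) : s ≤ k * V := by
  rcases le_or_gt s 0 with hs | hs
  · nlinarith [mul_nonneg hk hV]
  · nlinarith [mul_le_mul_of_nonneg_right hU hV]

namespace LogBarrier

def posSimplex (ι : Type*) [Fintype ι] : Set (ι → ℝ) :=
  {x | (∀ a, 0 < x a) ∧ ∑ a, x a = 1}

variable {ι : Type*} [Fintype ι]

/-- `D_ψ(x, x')`, the Bregman divergence of the log-barrier `ψ(x) = (1/η) Σ_a log (1 / x a)`. -/
noncomputable def bregman (η : ℝ) (x x' : ι → ℝ) : ℝ :=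
  (1 / η) * ∑ a, (Real.log (x' a / x a) + x a / x' a - 1)

theorem bregman_eq_sum_sub_one_sub_log (η : ℝ) (x x' : ι → ℝ) :
    bregman η x x' = (1 / η) * ∑ a, (x a / x' a - 1 - Real.log (x a / x' a)) := by
  unfold bregman
  congr 1
  refine sum_congr rfl fun a _ => ?_
  rw [← inv_div, Real.log_inv]
  ring

theorem bregman_three_point {η : ℝ} {x y z : ι → ℝ} (hx : ∀ a, 0 < x a) (hy : ∀ a, 0 < y a)
    (hz : ∀ a, 0 < z a) :
    bregman η x z =
      bregman η x y + bregman η y z + ∑ a, (x a - y a) * ((1 / η) * (1 / z a - 1 / y a)) := by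
  simp only [bregman, mul_sum, ← sum_add_distrib]
  refine sum_congr rfl fun a _ => ?_
  have hxa := (hx a).ne'
  have hya := (hy a).ne'
  have hza := (hz a).ne'
  have hlog : Real.log (z a / x a) = Real.log (y a / x a) + Real.log (z a / y a) := by
    rw [Real.log_div hza hxa, Real.log_div hya hxa, Real.log_div hza hya]; ring
  rw [hlog]
  field_simp
  ring

theorem bregman_le_two_div_mul_sum_sq {η : ℝ} (hη : 0 < η) {x y : ι → ℝ} (hy : ∀ a, 0 < y a)
    (hxy : ∀ a, y a / 2 ≤ x a) :
    bregman η x y ≤ 2 / η * ∑ a, ((x a - y a) / y a) ^ 2 := calc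
  bregman η x y ≤ 1 / η * ∑ a, 2 * ((x a - y a) / y a) ^ 2 := by
    rw [bregman_eq_sum_sub_one_sub_log]
    gcongr with a
    have hya := hy a
    have ht : 1 / 2 ≤ x a / y a := by rw [le_div_iff₀ hya]; linarith [hxy a]
    have h := Real.sub_one_sub_log_le_two_mul_sq ht
    rwa [div_sub_one hya.ne'] at h ⊢
  _ = 2 / η * ∑ a, ((x a - y a) / y a) ^ 2 := by rw [← mul_sum]; ring

theorem sum_sq_div_eight_mul_le_bregman {η : ℝ} (hη : 0 < η) {x y : ι → ℝ} (hx : ∀ a, 0 < x a)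
    (hy : ∀ a, 0 < y a) (hxy : ∀ a, x a ≤ 2 * y a) :
    1 / (8 * η) * ∑ a, ((x a - y a) / y a) ^ 2 ≤ bregman η x y := calc
  1 / (8 * η) * ∑ a, ((x a - y a) / y a) ^ 2 = 1 / η * ∑ a, ((x a - y a) / y a) ^ 2 / 8 := by
    rw [← sum_div]; ring
  _ ≤ bregman η x y := by
    rw [bregman_eq_sum_sub_one_sub_log]
    gcongr with a
    have hya := hy a
    have h := Real.sq_div_eight_le_sub_one_sub_log (div_pos (hx a) hya)
      (by rw [div_le_iff₀ hya]; exact hxy a)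
    rwa [div_sub_one hya.ne'] at h ⊢

theorem add_bregman_le_of_isMinOn {η : ℝ} (hη : 0 < η) {β p π y : ι → ℝ} (hp : ∀ a, 0 < p a)
    (hmin : IsMinOn (fun x => ∑ a, x a * -β a + bregman η x p) (posSimplex ι) π)
    (hπ : π ∈ posSimplex ι) (hy : y ∈ posSimplex ι) :
    ∑ a, π a * -β a + bregman η π p + bregman η y π ≤ ∑ a, y a * -β a + bregman η y p := by
  set g : ι → ℝ := fun a => (1 / η) * (1 / p a - 1 / π a) - β a
  have hgap : ∀ x : ι → ℝ, (∀ a, 0 < x a) → ∑ a, x a * -β a + bregman η x p =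
      ∑ a, π a * -β a + bregman η π p + (∑ a, (x a - π a) * g a + bregman η x π) := by
    intro x hx
    rw [bregman_three_point hx hπ.1 hp]
    simp only [g, mul_sub, sub_mul, sum_sub_distrib, mul_neg, sum_neg_distrib]
    ring
  set L := ∑ a, (y a - π a) * g a
  -- first-order optimality of `π` in the direction `y - π`
  have hL : 0 ≤ L := by
    refine nonneg_of_eventually_nonneg_mul_add_sq_mul
      (M := 2 / η * ∑ a, ((y a - π a) / π a) ^ 2) ?_
    filter_upwards [Ioc_mem_nhdsGT one_half_pos] with l ⟨hl0, hl1⟩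
    set x : ι → ℝ := fun a => π a + l * (y a - π a)
    have hhalf : ∀ a, π a / 2 ≤ x a := fun a => by nlinarith [hπ.1 a, hy.1 a]
    have hx : x ∈ posSimplex ι := by
      refine ⟨fun a => lt_of_lt_of_le (half_pos (hπ.1 a)) (hhalf a), ?_⟩
      simp only [x, sum_add_distrib, ← mul_sum, sum_sub_distrib, hπ.2, hy.2]
      ring
    have hlin : ∑ a, (x a - π a) * g a = l * L := by
      simp only [x, L, mul_sum]
      exact sum_congr rfl fun a _ => by ring
    have hquad : ∑ a, ((x a - π a) / π a) ^ 2 = l ^ 2 * ∑ a, ((y a - π a) / π a) ^ 2 := by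
      simp only [x, mul_sum]
      exact sum_congr rfl fun a _ => by ring
    have hD := bregman_le_two_div_mul_sum_sq hη hπ.1 hhalf
    have hFx := isMinOn_iff.1 hmin x hx
    rw [hgap x hx.1, hlin] at hFx
    rw [hquad] at hD
    linarith
  linarith [hgap y hy.1]

end LogBarrier

open LogBarrier in
theorem log_barrier_prediction_term_bound_general
    (A : ℕ) (η : ℝ) (hη : 0 < η)
    (D : (Fin A → ℝ) → (Fin A → ℝ) → ℝ)
    (hD : ∀ x x', D x x' =
      (1 / η) * ∑ a, (Real.log (x' a / x a) + x a / x' a - 1))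
    (πp π π'' : Fin A → ℝ) (β₁ β₂ : Fin A → ℝ)
    (hπp : (∀ a, 0 < πp a) ∧ ∑ a, πp a = 1)
    (hπ : (∀ a, 0 < π a) ∧ ∑ a, π a = 1)
    (hπ'' : (∀ a, 0 < π'' a) ∧ ∑ a, π'' a = 1)
    (hminF : ∀ x : Fin A → ℝ, (∀ a, 0 < x a) → ∑ a, x a = 1 →
      (∑ a, π a * (-(β₁ a))) + D π πp ≤ (∑ a, x a * (-(β₁ a))) + D x πp)
    (hminG : ∀ x : Fin A → ℝ, (∀ a, 0 < x a) → ∑ a, x a = 1 →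
      (∑ a, π'' a * (-(β₂ a))) + D π'' πp ≤ (∑ a, x a * (-(β₂ a))) + D x πp)
    (hsand : ∀ a, (1 / 2) * π a ≤ π'' a ∧ π'' a ≤ 2 * π a) :
    ∑ a, (π a - π'' a) * (β₁ a - β₂ a) ≤
      8 * η * ∑ a, (π a) ^ 2 * (β₁ a - β₂ a) ^ 2 := by
  obtain rfl : D = bregman η := funext₂ hD
  have hF := add_bregman_le_of_isMinOn hη hπp.1 (fun x hx => hminF x hx.1 hx.2) hπ hπ''
  have hG := hminG π hπ.1 hπ.2
  have hdiv : bregman η π'' π ≤ ∑ a, (π a - π'' a) * (β₁ a - β₂ a) := by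
    have : ∑ a, (π a - π'' a) * (β₁ a - β₂ a) = ∑ a, π'' a * -β₁ a - ∑ a, π a * -β₁ a
        + (∑ a, π a * -β₂ a - ∑ a, π'' a * -β₂ a) := by
      simp only [← sum_sub_distrib, ← sum_add_distrib]
      exact sum_congr rfl fun a _ => by ring
    linarith
  have hlow := sum_sq_div_eight_mul_le_bregman hη hπ''.1 hπ.1 fun a => (hsand a).2
  have hCS := sum_mul_sq_le_sq_mul_sq univ (fun a => (π'' a - π a) / π a)
    fun a => π a * (β₂ a - β₁ a)
  have hprod : ∑ a, (π'' a - π a) / π a * (π a * (β₂ a - β₁ a))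
      = ∑ a, (π a - π'' a) * (β₁ a - β₂ a) :=
    sum_congr rfl fun a _ => by field_simp [(hπ.1 a).ne']; ring
  have hsq : ∑ a, (π a * (β₂ a - β₁ a)) ^ 2 = ∑ a, π a ^ 2 * (β₁ a - β₂ a) ^ 2 :=
    sum_congr rfl fun a _ => by ring
  rw [hprod, hsq] at hCS
  refine le_mul_of_sq_le_mul_of_le_mul (by positivity) (by positivity) hCS ?_
  calc _ = 8 * η * (1 / (8 * η) * ∑ a, ((π'' a - π a) / π a) ^ 2) := by field_simp
    _ ≤ _ := by gcongr; exact hlow.trans hdiv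

/-- Bound on the optimistic-prediction term of online mirror descent with the
log-barrier regularizer: `⟨π - π'', β₁ - β₂⟩ ≤ 8η Σ_a π(a)² (β₁(a) - β₂(a))²`. -/
theorem log_barrier_prediction_term_bound
    (A : ℕ) (hA : 1 ≤ A) (η : ℝ) (hη : 0 < η)
    (D : (Fin A → ℝ) → (Fin A → ℝ) → ℝ)
    (hD : ∀ x x', D x x' =
      (1 / η) * ∑ a, (Real.log (x' a / x a) + x a / x' a - 1))
    (πp π π'' : Fin A → ℝ) (β₁ β₂ : Fin A → ℝ)
    (hπp : (∀ a, 0 < πp a) ∧ ∑ a, πp a = 1)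
    (hπ : (∀ a, 0 < π a) ∧ ∑ a, π a = 1)
    (hπ'' : (∀ a, 0 < π'' a) ∧ ∑ a, π'' a = 1)
    (hminF : ∀ x : Fin A → ℝ, (∀ a, 0 < x a) → ∑ a, x a = 1 →
      (∑ a, π a * (-(β₁ a))) + D π πp ≤ (∑ a, x a * (-(β₁ a))) + D x πp)
    (hminG : ∀ x : Fin A → ℝ, (∀ a, 0 < x a) → ∑ a, x a = 1 →
      (∑ a, π'' a * (-(β₂ a))) + D π'' πp ≤ (∑ a, x a * (-(β₂ a))) + D x πp)
    (hsand : ∀ a, (1 / 2) * π a ≤ π'' a ∧ π'' a ≤ 2 * π a) :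
    ∑ a, (π a - π'' a) * (β₁ a - β₂ a) ≤
      8 * η * ∑ a, (π a) ^ 2 * (β₁ a - β₂ a) ^ 2 :=
  log_barrier_prediction_term_bound_general A η hη D hD πp π π'' β₁ β₂ hπp hπ hπ'' hminF hminG hsand
end

section
/- Let S and A be finite nonempty sets, p a transition kernel assigning to each (s,a) a probability vector p(·|s,a) on S, r : S × A → ℝ, and let π and π̃ be stochastic policies (for each s, π(·|s) and π̃(·|s) are probability vectors on A). Let η > 0, N > 0 and t_mix > 0 be reals. Suppose: (i) μ̃ is a probability vector on S with Σ_{s,a} μ̃(s) π̃(a|s) p(s'|s,a) = μ̃(s') for all s'; (ii) J̃ := Σ_{s,a} μ̃(s) π̃(a|s) r(s,a); (iii) J ∈ ℝ, v : S → ℝ and q : S × A → ℝ satisfy q(s,a) = r(s,a) − J + Σ_{s'} p(s'|s,a) v(s') for all (s,a), and v(s) = Σ_a π(a|s) q(s,a) for all s; (iv) |q(s,a)| ≤ 6·t_mix for all (s,a); (v) |π̃(a|s) − π(a|s)| ≤ 120 η N · π(a|s) for all (s,a). Then |J̃ − J| ≤ 720 · η · N · t_mix. -/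
open Finset

/-- Stability of the average reward under a multiplicative policy perturbation:
if `|π̃(a|s) - π(a|s)| ≤ 120 η N π(a|s)` and `|q(s,a)| ≤ 6 t_mix`, then
`|J̃ - J| ≤ 720 η N t_mix`. -/
theorem average_reward_stability
    {S A : Type*} [Fintype S] [Fintype A] [Nonempty S] [Nonempty A]
    (p : S → A → S → ℝ)
    (hp0 : ∀ s a s', 0 ≤ p s a s') (hp1 : ∀ s a, ∑ s', p s a s' = 1)
    (r : S → A → ℝ)
    (π πt : S → A → ℝ)
    (hπ0 : ∀ s a, 0 ≤ π s a) (hπ1 : ∀ s, ∑ a, π s a = 1)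
    (hπt0 : ∀ s a, 0 ≤ πt s a) (hπt1 : ∀ s, ∑ a, πt s a = 1)
    (η N tmix : ℝ) (hη : 0 < η) (hN : 0 < N) (htmix : 0 < tmix)
    (μt : S → ℝ) (hμt0 : ∀ s, 0 ≤ μt s) (hμt1 : ∑ s, μt s = 1)
    (hstat : ∀ s', ∑ s, ∑ a, μt s * πt s a * p s a s' = μt s')
    (Jt : ℝ) (hJt : Jt = ∑ s, ∑ a, μt s * πt s a * r s a)
    (J : ℝ) (v : S → ℝ) (q : S → A → ℝ)
    (hq : ∀ s a, q s a = r s a - J + ∑ s', p s a s' * v s')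
    (hv : ∀ s, v s = ∑ a, π s a * q s a)
    (hqbound : ∀ s a, |q s a| ≤ 6 * tmix)
    (hclose : ∀ s a, |πt s a - π s a| ≤ 120 * η * N * π s a) :
    |Jt - J| ≤ 720 * η * N * tmix := by
  -- total masses
  have hmass : ∑ s, ∑ a, μt s * πt s a = 1 := by
    have : ∀ s, ∑ a, μt s * πt s a = μt s := by
      intro s; rw [← Finset.mul_sum, hπt1 s, mul_one]
    simp_rw [this]; exact hμt1
  -- first identity
  have h1 : ∑ s, ∑ a, μt s * πt s a * q s a = (Jt - J) + ∑ s', μt s' * v s' := by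
    have expand : ∀ s a, μt s * πt s a * q s a
        = μt s * πt s a * r s a - μt s * πt s a * J
          + ∑ s', μt s * πt s a * p s a s' * v s' := by
      intro s a
      rw [hq s a, mul_add, mul_sub, Finset.mul_sum]
      congr 1
      exact Finset.sum_congr rfl fun s' _ => by ring
    simp_rw [expand, Finset.sum_add_distrib, Finset.sum_sub_distrib]
    have hJterm : ∑ s, ∑ a, μt s * πt s a * J = J := by
      simp_rw [← Finset.sum_mul]
      rw [hmass, one_mul]
    have htail : ∑ s, ∑ a, ∑ s', μt s * πt s a * p s a s' * v s'
        = ∑ s', μt s' * v s' := by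
      calc ∑ s, ∑ a, ∑ s', μt s * πt s a * p s a s' * v s'
          = ∑ s, ∑ s', ∑ a, μt s * πt s a * p s a s' * v s' :=
            Finset.sum_congr rfl fun s _ => Finset.sum_comm
        _ = ∑ s', ∑ s, ∑ a, μt s * πt s a * p s a s' * v s' := Finset.sum_comm
        _ = ∑ s', μt s' * v s' := by
            apply Finset.sum_congr rfl
            intro s' _
            have : ∑ s, ∑ a, μt s * πt s a * p s a s' * v s'
                = (∑ s, ∑ a, μt s * πt s a * p s a s') * v s' := by
              rw [Finset.sum_mul]
              exact Finset.sum_congr rfl fun s _ => (Finset.sum_mul _ _ _).symm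
            rw [this, hstat s']
    rw [hJterm, htail, hJt]
  -- second identity
  have h2 : ∑ s, ∑ a, μt s * π s a * q s a = ∑ s, μt s * v s := by
    apply Finset.sum_congr rfl
    intro s _
    rw [hv s, Finset.mul_sum]
    apply Finset.sum_congr rfl
    intro a _; ring
  -- key identity
  have key : Jt - J = ∑ s, ∑ a, μt s * (πt s a - π s a) * q s a := by
    have : ∑ s, ∑ a, μt s * (πt s a - π s a) * q s a
        = (∑ s, ∑ a, μt s * πt s a * q s a) - ∑ s, ∑ a, μt s * π s a * q s a := by
      rw [← Finset.sum_sub_distrib]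
      apply Finset.sum_congr rfl
      intro s _
      rw [← Finset.sum_sub_distrib]
      apply Finset.sum_congr rfl
      intro a _; ring
    rw [this, h1, h2]; ring
  rw [key]
  calc |∑ s, ∑ a, μt s * (πt s a - π s a) * q s a|
      ≤ ∑ s, ∑ a, |μt s * (πt s a - π s a) * q s a| := by
        refine (Finset.abs_sum_le_sum_abs _ _).trans ?_
        apply Finset.sum_le_sum
        intro s _
        exact Finset.abs_sum_le_sum_abs _ _
    _ ≤ ∑ s, ∑ a, μt s * (120 * η * N * π s a) * (6 * tmix) := by
        apply Finset.sum_le_sum; intro s _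
        apply Finset.sum_le_sum; intro a _
        rw [abs_mul, abs_mul, abs_of_nonneg (hμt0 s)]
        apply mul_le_mul
        · exact mul_le_mul_of_nonneg_left (hclose s a) (hμt0 s)
        · exact hqbound s a
        · exact abs_nonneg _
        · exact mul_nonneg (hμt0 s) (mul_nonneg (by positivity) (hπ0 s a))
    _ = 720 * η * N * tmix * ∑ s, μt s * ∑ a, π s a := by
        rw [Finset.mul_sum]
        apply Finset.sum_congr rfl
        intro s _
        rw [Finset.mul_sum, Finset.mul_sum]
        apply Finset.sum_congr rfl
        intro a _; ring
    _ = 720 * η * N * tmix := by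
        simp_rw [hπ1, mul_one, hμt1, mul_one]
end
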